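/- arXiv:2004.11190 — 10 statements merged into one kernel-verified Lean document; each statement's English description precedes it below -/
import Mathlib

section
/- Let X_1, …, X_n be mutually independent real-valued random variables and set W_k = X_1 + ⋯ + X_k for 1 ≤ k ≤ n. Then for every real number w and every h ≥ 0, P[max_{1≤k≤n} W_k > w] ≤ e^{−hw} · max_{1≤k≤n} E[e^{h W_k}]. -/
open MeasureTheory ProbabilityTheory
open scoped ENNReal

/-!
Let `τ` be the first `k ≥ 1` with `W k > w`, and `c = max_k E[e^{h W_k}]`. On `{τ = k}` we have
`e^{h w} ≤ e^{h W_k}`, and `e^{h W_n} = e^{h W_k} e^{h (W_n - W_k)}`, where the last factor is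
independent of `X_1, …, X_k`. Hence
`e^{h w} P[τ = k] E[e^{h W_n}] ≤ E[e^{h W_k}] E[e^{h W_n}; τ = k] ≤ c E[e^{h W_n}; τ = k]`.
Summing over `k` and dividing by `E[e^{h W_n}]`, which is finite unless `c = ∞`, gives
`e^{h w} P[τ ≤ n] ≤ c`.
-/

section FirstPassage

variable {Ω α : Type*} [LinearOrder α]

def firstPassage (W : ℕ → Ω → α) (w : α) (k : ℕ) : Set Ω :=
  {ω | w < W k ω ∧ ∀ j ∈ Finset.Ico 1 k, W j ω ≤ w}

lemma pairwiseDisjoint_firstPassage (W : ℕ → Ω → α) (w : α) :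
    (Set.Ici 1).PairwiseDisjoint (firstPassage W w) := by
  have hdisj_of_lt : ∀ a b, 1 ≤ a → a < b → Disjoint (firstPassage W w a) (firstPassage W w b) :=
    fun a b ha hab => Set.disjoint_left.mpr fun _ hωa hωb =>
      (hωb.2 a (Finset.mem_Ico.mpr ⟨ha, hab⟩)).not_gt hωa.1
  intro a ha b hb hab
  rcases hab.lt_or_gt with hlt | hgt
  · exact hdisj_of_lt a b ha hlt
  · exact (hdisj_of_lt b a hb hgt).symm

lemma setOf_exists_lt_eq_biUnion_firstPassage (W : ℕ → Ω → α) (w : α) (n : ℕ) :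
    {ω | ∃ k ∈ Finset.Icc 1 n, w < W k ω} = ⋃ k ∈ Finset.Icc 1 n, firstPassage W w k := by
  classical
  ext ω
  simp only [Set.mem_iUnion, exists_prop]
  refine ⟨fun hex => ⟨Nat.find hex, (Nat.find_spec hex).1, (Nat.find_spec hex).2,
    fun j hj => ?_⟩, fun ⟨k, hk, hωk⟩ => ⟨k, hk, hωk.1⟩⟩
  obtain ⟨hj1, hjk⟩ := Finset.mem_Ico.mp hj
  have hjn : j ≤ n := hjk.le.trans (Finset.mem_Icc.mp (Nat.find_spec hex).1).2
  exact not_lt.mp fun hlt => Nat.find_min hex hjk ⟨Finset.mem_Icc.mpr ⟨hj1, hjn⟩, hlt⟩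

variable [TopologicalSpace α] [OrderClosedTopology α] [SecondCountableTopology α]
  [MeasurableSpace α] [OpensMeasurableSpace α]

lemma measurableSet_firstPassage {m : MeasurableSpace Ω} {W : ℕ → Ω → α} {k : ℕ}
    (hW : ∀ j ≤ k, Measurable[m] (W j)) (w : α) : MeasurableSet[m] (firstPassage W w k) := by
  have hbefore :
      {ω | ∀ j ∈ Finset.Ico 1 k, W j ω ≤ w} = ⋂ j ∈ Finset.Ico 1 k, {ω | W j ω ≤ w} := by
    ext; simp
  change MeasurableSet ({ω | w < W k ω} ∩ {ω | ∀ j ∈ Finset.Ico 1 k, W j ω ≤ w})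
  rw [hbefore]
  exact (measurableSet_lt measurable_const (hW k le_rfl)).inter <| Finset.measurableSet_biInter _
    fun j hj => measurableSet_le (hW j (Finset.mem_Ico.mp hj).2.le) measurable_const

end FirstPassage

section Integrals

variable {Ω ι : Type*} {mΩ : MeasurableSpace Ω} {μ : Measure Ω}

lemma mul_measure_biUnion_le_of_forall_mul_le_setLIntegral {s : Finset ι} {A : ι → Set Ω}
    (hdisj : (s : Set ι).PairwiseDisjoint A) (hA : ∀ k ∈ s, MeasurableSet (A k))
    {F : Ω → ℝ≥0∞} (hF₀ : ∫⁻ ω, F ω ∂μ ≠ 0) (hF : ∫⁻ ω, F ω ∂μ ≠ ∞) {a c : ℝ≥0∞}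
    (hle : ∀ k ∈ s, a * μ (A k) * ∫⁻ ω, F ω ∂μ ≤ c * ∫⁻ ω in A k, F ω ∂μ) :
    a * μ (⋃ k ∈ s, A k) ≤ c := by
  refine (ENNReal.mul_le_mul_iff_left hF₀ hF).mp ?_
  calc a * μ (⋃ k ∈ s, A k) * ∫⁻ ω, F ω ∂μ
      = ∑ k ∈ s, a * μ (A k) * ∫⁻ ω, F ω ∂μ := by
        rw [measure_biUnion_finset hdisj hA, Finset.mul_sum, Finset.sum_mul]
    _ ≤ ∑ k ∈ s, c * ∫⁻ ω in A k, F ω ∂μ := Finset.sum_le_sum hle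
    _ = c * ∫⁻ ω in ⋃ k ∈ s, A k, F ω ∂μ := by
        rw [lintegral_biUnion_finset hdisj hA, Finset.mul_sum]
    _ ≤ c * ∫⁻ ω, F ω ∂μ := by gcongr; exact Measure.restrict_le_self

lemma mul_measure_mul_lintegral_le_setLIntegral_of_indep {m₁ m₂ : MeasurableSpace Ω}
    (hm₁ : m₁ ≤ mΩ) (hm₂ : m₂ ≤ mΩ) (hindep : Indep m₁ m₂ μ) {f G : Ω → ℝ≥0∞}
    (hf : Measurable[m₁] f) (hG : Measurable[m₂] G) {A : Set Ω} (hA : MeasurableSet[m₁] A)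
    {a c : ℝ≥0∞} (haf : ∀ ω ∈ A, a ≤ f ω) (hfc : ∫⁻ ω, f ω ∂μ ≤ c) :
    a * μ A * ∫⁻ ω, f ω * G ω ∂μ ≤ c * ∫⁻ ω in A, f ω * G ω ∂μ := by
  have hAf : a * μ A ≤ ∫⁻ ω in A, f ω ∂μ :=
    setLIntegral_const A a ▸ setLIntegral_mono (hf.mono hm₁ le_rfl) haf
  have hsplit : ∫⁻ ω in A, f ω * G ω ∂μ = (∫⁻ ω in A, f ω ∂μ) * ∫⁻ ω, G ω ∂μ := by
    simp_rw [← lintegral_indicator (hm₁ _ hA), Set.indicator_mul_left]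
    exact lintegral_mul_eq_lintegral_mul_lintegral_of_independent_measurableSpace hm₁ hm₂
      hindep (hf.indicator hA) hG
  calc a * μ A * ∫⁻ ω, f ω * G ω ∂μ
      = (∫⁻ ω, f ω ∂μ) * (a * μ A * ∫⁻ ω, G ω ∂μ) := by
        rw [lintegral_mul_eq_lintegral_mul_lintegral_of_independent_measurableSpace hm₁ hm₂
          hindep hf hG]
        ring
    _ ≤ c * ((∫⁻ ω in A, f ω ∂μ) * ∫⁻ ω, G ω ∂μ) := by gcongr
    _ = c * ∫⁻ ω in A, f ω * G ω ∂μ := by rw [hsplit]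

end Integrals

section Blocks

variable {Ω : Type*} {mΩ : MeasurableSpace Ω}

abbrev blockMeasurableSpace (X : ℕ → Ω → ℝ) (n : ℕ) (s : Set ℕ) : MeasurableSpace Ω :=
  ⨆ i ∈ Fin.val ⁻¹' s, MeasurableSpace.comap (X (i : Fin n)) inferInstance

variable {X : ℕ → Ω → ℝ} {n : ℕ}

lemma blockMeasurableSpace_le (hX : ∀ i, Measurable (X i)) (s : Set ℕ) :
    blockMeasurableSpace X n s ≤ mΩ :=
  iSup₂_le fun i _ => (hX i).comap_le

lemma indep_blockMeasurableSpace {μ : Measure Ω} (hX : ∀ i, Measurable (X i))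
    (hindep : iIndepFun (fun i : Fin n => X i) μ) {s t : Set ℕ} (hst : Disjoint s t) :
    Indep (blockMeasurableSpace X n s) (blockMeasurableSpace X n t) μ :=
  indep_iSup_of_disjoint (fun i : Fin n => (hX i).comap_le)
    ((iIndepFun_iff_iIndep _ (fun i : Fin n => X i) μ).mp hindep) (hst.preimage _)

lemma measurable_sum_blockMeasurableSpace {s : Set ℕ} {t : Finset ℕ} (hts : ∀ j ∈ t, j ∈ s)
    (htn : ∀ j ∈ t, j < n) :
    Measurable[blockMeasurableSpace X n s] fun ω => ∑ j ∈ t, X j ω :=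
  Finset.measurable_sum t fun j hj => (comap_measurable (X j)).mono
    (le_iSup₂_of_le (⟨j, htn j hj⟩ : Fin n) (hts j hj) le_rfl) le_rfl

end Blocks

section PartialSums

variable {Ω : Type*} {mΩ : MeasurableSpace Ω} {X W : ℕ → Ω → ℝ} {n : ℕ}

lemma measurable_partialSum_blockMeasurableSpace
    (hW : ∀ k ω, W k ω = ∑ j ∈ Finset.range k, X j ω) {j k : ℕ} (hjk : j ≤ k) (hkn : k ≤ n) :
    Measurable[blockMeasurableSpace X n (Set.Iio k)] (W j) := by
  simp only [funext (hW j)]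
  exact measurable_sum_blockMeasurableSpace
    (fun i hi => (Finset.mem_range.mp hi).trans_le hjk)
    (fun i hi => ((Finset.mem_range.mp hi).trans_le hjk).trans_le hkn)

lemma ofReal_exp_mul_measure_firstPassage_mul_le {P : Measure Ω}
    (hmeas : ∀ i, Measurable (X i)) (hindep : iIndepFun (fun i : Fin n => X i) P)
    (hW : ∀ k ω, W k ω = ∑ j ∈ Finset.range k, X j ω) {h : ℝ} (hh : 0 ≤ h) (w : ℝ)
    {k : ℕ} (hkn : k ≤ n) {c : ℝ≥0∞}
    (hc : ∫⁻ ω, ENNReal.ofReal (Real.exp (h * W k ω)) ∂P ≤ c) :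
    ENNReal.ofReal (Real.exp (h * w)) * P (firstPassage W w k) *
        ∫⁻ ω, ENNReal.ofReal (Real.exp (h * W n ω)) ∂P ≤
      c * ∫⁻ ω in firstPassage W w k, ENNReal.ofReal (Real.exp (h * W n ω)) ∂P := by
  have hpast {j : ℕ} (hjk : j ≤ k) := measurable_partialSum_blockMeasurableSpace hW hjk hkn
  have hincrement : Measurable[blockMeasurableSpace X n (Set.Ici k)]
      fun ω => ∑ j ∈ Finset.Ico k n, X j ω :=
    measurable_sum_blockMeasurableSpace (fun j hj => (Finset.mem_Ico.mp hj).1)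
      (fun j hj => (Finset.mem_Ico.mp hj).2)
  have hsplit (ω : Ω) : ENNReal.ofReal (Real.exp (h * W k ω)) *
      ENNReal.ofReal (Real.exp (h * ∑ j ∈ Finset.Ico k n, X j ω)) =
        ENNReal.ofReal (Real.exp (h * W n ω)) := by
    rw [← ENNReal.ofReal_mul (Real.exp_nonneg _), ← Real.exp_add, hW, hW,
      ← Finset.sum_range_add_sum_Ico _ hkn, mul_add]
  simpa only [hsplit] using mul_measure_mul_lintegral_le_setLIntegral_of_indep
    (blockMeasurableSpace_le hmeas _) (blockMeasurableSpace_le hmeas _)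
    (indep_blockMeasurableSpace hmeas hindep (Set.Iio_disjoint_Ici le_rfl))
    ((hpast le_rfl).const_mul h).exp.ennreal_ofReal
    (hincrement.const_mul h).exp.ennreal_ofReal
    (measurableSet_firstPassage (fun j hj => hpast hj) w)
    (fun ω hω => ENNReal.ofReal_le_ofReal (Real.exp_le_exp.mpr
      (mul_le_mul_of_nonneg_left hω.1.le hh)))
    hc

end PartialSums

lemma le_ofReal_exp_neg_mul_of_ofReal_exp_mul_le {x : ℝ} {a c : ℝ≥0∞}
    (hac : ENNReal.ofReal (Real.exp x) * a ≤ c) : a ≤ ENNReal.ofReal (Real.exp (-x)) * c :=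
  calc a = ENNReal.ofReal (Real.exp (-x)) * (ENNReal.ofReal (Real.exp x) * a) := by
        rw [← mul_assoc, ← ENNReal.ofReal_mul (Real.exp_nonneg _), ← Real.exp_add]
        simp
    _ ≤ ENNReal.ofReal (Real.exp (-x)) * c := by gcongr

/-- Key Lemma, finite maximum form.
`X 0, X 1, …` are the random variables `X_1, X_2, …` (so `X i` is `X_{i+1}`),
and `W k = X_1 + ⋯ + X_k = ∑_{j < k} X j`.  If `X_1, …, X_n` are mutually
independent, then for every real `w` and every `h ≥ 0`,
`P[max_{1 ≤ k ≤ n} W k > w] ≤ e^{-h w} · max_{1 ≤ k ≤ n} E[e^{h W k}]`,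
where the expectation is the Lebesgue integral of the nonnegative function,
with values in `(0, ∞]`. -/
theorem stmt0 {Ω : Type*} [MeasurableSpace Ω] (P : Measure Ω) [IsProbabilityMeasure P]
    (n : ℕ) (hn : 1 ≤ n) (X : ℕ → Ω → ℝ)
    (hmeas : ∀ i, Measurable (X i))
    (hindep : iIndepFun (fun i : Fin n => X i) P)
    (W : ℕ → Ω → ℝ) (hW : ∀ k ω, W k ω = ∑ j ∈ Finset.range k, X j ω)
    (w h : ℝ) (hh : 0 ≤ h) :
    P {ω | ∃ k ∈ Finset.Icc 1 n, w < W k ω} ≤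
      ENNReal.ofReal (Real.exp (-h * w)) *
        ⨆ k ∈ Finset.Icc 1 n, ∫⁻ ω, ENNReal.ofReal (Real.exp (h * W k ω)) ∂P := by
  set c := ⨆ k ∈ Finset.Icc 1 n, ∫⁻ ω, ENNReal.ofReal (Real.exp (h * W k ω)) ∂P
  have hmgf_le (k : ℕ) (hk : k ∈ Finset.Icc 1 n) :
      ∫⁻ ω, ENNReal.ofReal (Real.exp (h * W k ω)) ∂P ≤ c :=
    le_iSup₂ (f := fun k (_ : k ∈ Finset.Icc 1 n) =>
      ∫⁻ ω, ENNReal.ofReal (Real.exp (h * W k ω)) ∂P) k hk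
  rcases eq_or_ne c ∞ with hc | hc
  · rw [hc, ENNReal.mul_top (by simp [Real.exp_pos])]
    exact le_top
  have hW_meas (j : ℕ) : Measurable (W j) := by
    simp only [funext (hW j)]
    fun_prop
  have hmgf_n_pos : ∫⁻ ω, ENNReal.ofReal (Real.exp (h * W n ω)) ∂P ≠ 0 := by
    rw [Ne, lintegral_eq_zero_iff (by fun_prop)]
    simp [Filter.EventuallyEq, Real.exp_pos, IsProbabilityMeasure.ne_zero]
  rw [setOf_exists_lt_eq_biUnion_firstPassage, neg_mul]
  exact le_ofReal_exp_neg_mul_of_ofReal_exp_mul_le <|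
    mul_measure_biUnion_le_of_forall_mul_le_setLIntegral
      ((pairwiseDisjoint_firstPassage W w).subset fun k hk => (Finset.mem_Icc.mp hk).1)
      (fun k _ => measurableSet_firstPassage (fun j _ => hW_meas j) w) hmgf_n_pos
      (ne_top_of_le_ne_top hc (hmgf_le n (Finset.mem_Icc.mpr ⟨hn, le_rfl⟩)))
      fun k hk => ofReal_exp_mul_measure_firstPassage_mul_le hmeas hindep hW hh w
        (Finset.mem_Icc.mp hk).2 (hmgf_le k hk)
end

section
/- Let X_1, X_2, … be mutually independent real-valued random variables and set W_k = X_1 + ⋯ + X_k for k ≥ 1. Then for every real number w and every h ≥ 0, P[sup_{k≥1} W_k > w] ≤ e^{−hw} · sup_{k≥1} E[e^{h W_k}], where the event {sup_{k≥1} W_k > w} is the union over k of the events {W_k > w}. -/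
/-!
Let `D k` be the event that `W (k + 1)` is the first partial sum exceeding `w`. The increment
`W (n + 1) - W (k + 1)` is independent of `X 0, …, X k`, hence of `D k` and of `W (k + 1)`; so for
`k ≤ n`, writing `E m := E[e^{h W (m + 1)}]` and `S := sup_m E m`,
`E[e^{h W (n + 1)}; D k] · E k = E n · E[e^{h W (k + 1)}; D k] ≥ E n · e^{h w} P(D k)`.
Bounding `E k ≤ S`, summing over `k ≤ n` (the `D k` are disjoint) and dividing by `E n` gives
`e^{h w} P(D 0 ∪ ⋯ ∪ D n) ≤ S`. The cross-multiplied identity replaces Doob's argument, which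
would need `E k ≤ E n`; that fails when the `X i` drift downwards.
-/

open MeasureTheory ProbabilityTheory Finset Function
open scoped ENNReal

theorem mul_measure_iUnion_le_iSup_lintegral {Ω : Type*} [MeasurableSpace Ω] {μ : Measure Ω}
    {f : ℕ → Ω → ℝ≥0∞} {D : ℕ → Set Ω} {c : ℝ≥0∞}
    (hD : ∀ k, MeasurableSet (D k)) (hdisj : Pairwise (Disjoint on D))
    (hc : ∀ k, ∀ ω ∈ D k, c ≤ f k ω) (hpos : ∀ n, ∫⁻ ω, f n ω ∂μ ≠ 0)
    (hratio : ∀ k n, k ≤ n → (∫⁻ ω in D k, f n ω ∂μ) * ∫⁻ ω, f k ω ∂μ =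
      (∫⁻ ω, f n ω ∂μ) * ∫⁻ ω in D k, f k ω ∂μ) :
    c * μ (⋃ k, D k) ≤ ⨆ n, ∫⁻ ω, f n ω ∂μ := by
  set E := fun n => ∫⁻ ω, f n ω ∂μ
  set S := ⨆ n, E n
  obtain hS | hS := eq_or_ne S ⊤
  · rw [hS]; exact le_top
  rw [measure_iUnion hdisj hD, ← ENNReal.tsum_mul_left]
  refine ENNReal.tsum_le_of_sum_range_le fun n => ?_
  have hEn : E n ≤ S := le_iSup E n
  have hstep : ∀ k ∈ range n, E n * (c * μ (D k)) ≤ S * ∫⁻ ω in D k, f n ω ∂μ := by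
    intro k hk
    calc E n * (c * μ (D k)) ≤ E n * ∫⁻ ω in D k, f k ω ∂μ := by
          gcongr
          rw [← setLIntegral_const]
          exact setLIntegral_mono' (hD k) (hc k)
      _ = (∫⁻ ω in D k, f n ω ∂μ) * E k := (hratio k n (mem_range.1 hk).le).symm
      _ ≤ S * ∫⁻ ω in D k, f n ω ∂μ := by rw [mul_comm]; gcongr; exact le_iSup E k
  have hsum : ∑ k ∈ range n, ∫⁻ ω in D k, f n ω ∂μ ≤ E n := by
    rw [← lintegral_biUnion_finset (fun i _ j _ hij => hdisj hij) (fun k _ => hD k)]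
    exact setLIntegral_le_lintegral _ _
  refine (ENNReal.mul_le_mul_iff_right (hpos n) (ne_top_of_le_ne_top hS hEn)).1 ?_
  calc E n * ∑ k ∈ range n, c * μ (D k) ≤ S * ∑ k ∈ range n, ∫⁻ ω in D k, f n ω ∂μ := by
        rw [mul_sum, mul_sum]; exact sum_le_sum hstep
    _ ≤ S * E n := by gcongr
    _ = E n * S := mul_comm _ _

theorem setLIntegral_mul_eq_of_indep {Ω : Type*} {m₁ m₂ mΩ : MeasurableSpace Ω} {μ : Measure Ω}
    (h₁ : m₁ ≤ mΩ) (h₂ : m₂ ≤ mΩ) (hind : Indep m₁ m₂ μ) {f g : Ω → ℝ≥0∞}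
    (hf : Measurable[m₁] f) (hg : Measurable[m₂] g)
    {A : Set Ω} (hA : MeasurableSet[m₁] A) :
    ∫⁻ ω in A, f ω * g ω ∂μ = (∫⁻ ω in A, f ω ∂μ) * ∫⁻ ω, g ω ∂μ := by
  rw [← lintegral_indicator (h₁ _ hA), ← lintegral_indicator (h₁ _ hA),
    ← lintegral_mul_eq_lintegral_mul_lintegral_of_independent_measurableSpace h₁ h₂ hind
      (hf.indicator hA) hg]
  simp only [Set.indicator_mul_left]

theorem setLIntegral_mul_lintegral_comm_of_indep {Ω : Type*} {m₁ m₂ mΩ : MeasurableSpace Ω}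
    {μ : Measure Ω} (h₁ : m₁ ≤ mΩ) (h₂ : m₂ ≤ mΩ) (hind : Indep m₁ m₂ μ) {F f g : Ω → ℝ≥0∞}
    (hfg : ∀ ω, F ω = f ω * g ω)
    (hf : Measurable[m₁] f) (hg : Measurable[m₂] g) {A : Set Ω} (hA : MeasurableSet[m₁] A) :
    (∫⁻ ω in A, F ω ∂μ) * ∫⁻ ω, f ω ∂μ = (∫⁻ ω, F ω ∂μ) * ∫⁻ ω in A, f ω ∂μ := by
  have hF : ∀ B, MeasurableSet[m₁] B →
      ∫⁻ ω in B, F ω ∂μ = (∫⁻ ω in B, f ω ∂μ) * ∫⁻ ω, g ω ∂μ := fun B hB => by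
    simp only [hfg]
    exact setLIntegral_mul_eq_of_indep h₁ h₂ hind hf hg hB
  rw [hF A hA, ← setLIntegral_univ (f := F), hF _ MeasurableSet.univ, setLIntegral_univ]
  ring

theorem measurable_sum_of_subset_iSup_comap {Ω ι M : Type*} [AddCommMonoid M] [MeasurableSpace M]
    [MeasurableAdd₂ M] {X : ι → Ω → M} {s : Set ι} {t : Finset ι} (ht : ↑t ⊆ s) :
    Measurable[⨆ i ∈ s, MeasurableSpace.comap (X i) inferInstance] fun ω => ∑ i ∈ t, X i ω :=
  Finset.measurable_sum _ fun i hi =>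
    (comap_measurable (X i)).mono (le_iSup₂_of_le i (ht hi) le_rfl) le_rfl

theorem ProbabilityTheory.iIndepFun.setLIntegral_exp_sum_range_mul_comm {Ω : Type*}
    [MeasurableSpace Ω] {μ : Measure Ω} {X : ℕ → Ω → ℝ} (hX : ∀ i, Measurable (X i))
    (hind : iIndepFun X μ) (h : ℝ)
    {k n : ℕ} (hkn : k ≤ n) {A : Set Ω}
    (hA : MeasurableSet[⨆ i ∈ Set.Iio k, MeasurableSpace.comap (X i) inferInstance] A) :
    (∫⁻ ω in A, .ofReal (Real.exp (h * ∑ i ∈ range n, X i ω)) ∂μ) *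
        ∫⁻ ω, .ofReal (Real.exp (h * ∑ i ∈ range k, X i ω)) ∂μ =
      (∫⁻ ω, .ofReal (Real.exp (h * ∑ i ∈ range n, X i ω)) ∂μ) *
        ∫⁻ ω in A, .ofReal (Real.exp (h * ∑ i ∈ range k, X i ω)) ∂μ := by
  have hexp : ∀ {s : Set ℕ} {t : Finset ℕ}, ↑t ⊆ s →
      Measurable[⨆ i ∈ s, MeasurableSpace.comap (X i) inferInstance]
        fun ω => ENNReal.ofReal (Real.exp (h * ∑ i ∈ t, X i ω)) := fun ht =>
    (Real.measurable_exp.comp ((measurable_sum_of_subset_iSup_comap ht).const_mul h)).ennreal_ofReal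
  refine setLIntegral_mul_lintegral_comm_of_indep (iSup₂_le fun i _ => (hX i).comap_le)
    (iSup₂_le fun i _ => (hX i).comap_le)
    (indep_iSup_of_disjoint (fun i => (hX i).comap_le) hind (Set.Iio_disjoint_Ici le_rfl))
    (fun ω => ?_) (hexp (t := range k) fun i hi => by simpa using hi)
    (hexp (t := Ico k n) fun i hi => by simp at hi ⊢; omega) hA
  rw [← sum_range_add_sum_Ico _ hkn, mul_add, Real.exp_add, ENNReal.ofReal_mul (Real.exp_nonneg _)]

/-- Key Lemma, supremum form.
`X i` stands for `X_{i+1}` and `W k = X_1 + ⋯ + X_k = ∑_{j < k} X j`.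
If `X_1, X_2, …` are mutually independent, then for every real `w` and `h ≥ 0`,
`P[sup_{k ≥ 1} W k > w] ≤ e^{-h w} · sup_{k ≥ 1} E[e^{h W k}]`,
where `{sup_{k≥1} W_k > w}` is the union over `k ≥ 1` of `{W_k > w}` and the
expectations are Lebesgue integrals with values in `(0, ∞]`. -/
theorem stmt1 {Ω : Type*} [MeasurableSpace Ω] (P : Measure Ω) [IsProbabilityMeasure P]
    (X : ℕ → Ω → ℝ)
    (hmeas : ∀ i, Measurable (X i))
    (hindep : iIndepFun X P)
    (W : ℕ → Ω → ℝ) (hW : ∀ k ω, W k ω = ∑ j ∈ Finset.range k, X j ω)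
    (w h : ℝ) (hh : 0 ≤ h) :
    P (⋃ k : ℕ, {ω | w < W (k + 1) ω}) ≤
      ENNReal.ofReal (Real.exp (-h * w)) *
        ⨆ k : ℕ, ∫⁻ ω, ENNReal.ofReal (Real.exp (h * W (k + 1) ω)) ∂P := by
  obtain rfl : W = fun k ω => ∑ j ∈ range k, X j ω := funext₂ hW
  set B : ℕ → Set Ω := fun k => {ω | w < ∑ j ∈ range (k + 1), X j ω}
  have hB : ∀ j k, j ≤ k →
      MeasurableSet[⨆ i ∈ Set.Iio (k + 1), MeasurableSpace.comap (X i) inferInstance] (B j) :=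
    fun j k hjk => measurableSet_lt measurable_const
      (measurable_sum_of_subset_iSup_comap fun i hi => by simp at hi ⊢; omega)
  have hD : ∀ k,
      MeasurableSet[⨆ i ∈ Set.Iio (k + 1), MeasurableSpace.comap (X i) inferInstance]
        (disjointed B k) := fun k => by
    rw [disjointed_eq_inter_compl]
    exact (hB k k le_rfl).inter (.iInter fun j => .iInter fun hj => (hB j k hj.le).compl)
  have hpos : ∀ k, ∫⁻ ω, ENNReal.ofReal (Real.exp (h * ∑ j ∈ range (k + 1), X j ω)) ∂P ≠ 0 := by
    intro k
    refine ((lintegral_pos_iff_support (by fun_prop)).2 ?_).ne'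
    simp [Function.support, Real.exp_pos]
  have key := mul_measure_iUnion_le_iSup_lintegral (μ := P) (c := .ofReal (Real.exp (h * w)))
    (fun k => iSup₂_le (fun i _ => (hmeas i).comap_le) _ (hD k)) (disjoint_disjointed B)
    (fun k ω hω => ENNReal.ofReal_le_ofReal (Real.exp_le_exp.2
      (mul_le_mul_of_nonneg_left (disjointed_subset B k hω).le hh))) hpos
    fun k n hkn => hindep.setLIntegral_exp_sum_range_mul_comm hmeas h (by omega) (hD k)
  rw [iUnion_disjointed] at key
  calc P (⋃ k, B k)
      = .ofReal (Real.exp (-h * w)) * (.ofReal (Real.exp (h * w)) * P (⋃ k, B k)) := by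
        rw [← mul_assoc, ← ENNReal.ofReal_mul (Real.exp_nonneg _), ← Real.exp_add]
        simp
    _ ≤ _ := by gcongr
end

section
/- Let Y_1, Y_2, … be mutually independent real-valued random variables, S_k = Y_1 + ⋯ + Y_k. Then for every u > 0 and every h ≥ 0: P[sup_{k≥1} S_k > u] ≤ e^{−hu} · sup_{k≥1} E[e^{h S_k}], and moreover sup_{k≥1} E[e^{h S_k}] = sup_{k≥1} ∏_{j=1}^{k} E[e^{h Y_j}]. -/
open MeasureTheory ProbabilityTheory Finset Function
open scoped ENNReal

/-!
Split `{sup_k S_k > u}` into the disjoint first-passage events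
`A_k = {S_{k+1} > u, S_1 ≤ u, …, S_k ≤ u}` and put `a_k = E[e^{h S_{k+1}}; A_k]`, so that Markov's
inequality gives `P(A_k) ≤ e^{-hu} a_k`. With `b_j = E[e^{h Y_j}]` and `B_k = b_0 ⋯ b_{k-1}`, the
process `e^{h S_k} / B_k` is a martingale: since `A_k` is determined by `Y_0, …, Y_k`, independence
of the later increments gives `∑_{k ≤ m} a_k B_{m+1} / B_{k+1} ≤ E[e^{h S_{m+1}}] = B_{m+1}`.
Hence `∑_k a_k / B_{k+1} ≤ 1`, and so `∑_k a_k ≤ sup_k B_{k+1}`.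
-/

theorem measurableSet_disjointed_of_forall_le {Ω : Type*} {m : MeasurableSpace Ω}
    {E : ℕ → Set Ω} {k : ℕ} (hE : ∀ j ≤ k, MeasurableSet[m] (E j)) :
    MeasurableSet[m] (disjointed E k) := by
  rw [disjointed_eq_inter_compl]
  exact (hE k le_rfl).inter
    (MeasurableSet.biInter (Set.to_countable _) fun j hj => (hE j (le_of_lt hj)).compl)

theorem ENNReal.tsum_le_iSup_prod_of_sum_mul_prod_le {a b : ℕ → ℝ≥0∞} (hb : ∀ j, b j ≠ 0)
    (hab : ∀ m, ∑ k ∈ range (m + 1), a k * ∏ j ∈ Ico (k + 1) (m + 1), b j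
      ≤ ∏ j ∈ range (m + 1), b j) :
    ∑' k, a k ≤ ⨆ k, ∏ j ∈ range (k + 1), b j := by
  set B : ℕ → ℝ≥0∞ := fun k => ∏ j ∈ range (k + 1), b j
  rcases eq_or_ne (⨆ k, B k) ∞ with hM | hM
  · simp [B, hM]
  have hB0 : ∀ k, B k ≠ 0 := fun k => prod_ne_zero_iff.2 fun j _ => hb j
  have hBtop : ∀ k, B k ≠ ∞ := fun k => ne_top_of_le_ne_top hM (le_iSup B k)
  have hweights : ∀ m, ∑ k ∈ range (m + 1), a k / B k ≤ 1 := by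
    intro m
    refine (ENNReal.mul_le_mul_iff_left (hB0 m) (hBtop m)).1 ?_
    rw [one_mul, sum_mul]
    refine le_of_eq_of_le (sum_congr rfl fun k hk => ?_) (hab m)
    rw [show B m = B k * ∏ j ∈ Ico (k + 1) (m + 1), b j from
        (prod_range_mul_prod_Ico b (Nat.succ_le_succ (mem_range_succ_iff.1 hk))).symm,
      ← mul_assoc, ENNReal.div_mul_cancel (hB0 k) (hBtop k)]
  calc ∑' k, a k = ∑' k, a k / B k * B k := by
        simp only [ENNReal.div_mul_cancel (hB0 _) (hBtop _)]
    _ ≤ ∑' k, a k / B k * ⨆ k, B k :=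
        ENNReal.tsum_le_tsum fun k => mul_le_mul_right (le_iSup B k) _
    _ = (∑' k, a k / B k) * ⨆ k, B k := ENNReal.tsum_mul_right
    _ ≤ ⨆ k, B k := by
        refine mul_le_of_le_one_left' ?_
        rw [ENNReal.tsum_eq_iSup_nat' (Filter.tendsto_add_atTop_nat 1)]
        exact iSup_le hweights

theorem measure_le_ofReal_exp_neg_mul_setLIntegral {Ω : Type*} [MeasurableSpace Ω]
    {μ : Measure Ω} {A : Set Ω} {X : Ω → ℝ} (hX : Measurable X) {u h : ℝ} (hh : 0 ≤ h)
    (hAX : ∀ ω ∈ A, u ≤ X ω) :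
    μ A ≤ ENNReal.ofReal (Real.exp (-h * u)) *
      ∫⁻ ω in A, ENNReal.ofReal (Real.exp (h * X ω)) ∂μ := by
  calc μ A = ENNReal.ofReal (Real.exp (-h * u)) *
        ∫⁻ _ in A, ENNReal.ofReal (Real.exp (h * u)) ∂μ := by
        rw [setLIntegral_const, ← mul_assoc, ← ENNReal.ofReal_mul (Real.exp_pos _).le,
          ← Real.exp_add, neg_mul, neg_add_cancel, Real.exp_zero, ENNReal.ofReal_one, one_mul]
    _ ≤ _ := mul_le_mul_right (setLIntegral_mono (hX.const_mul h).exp.ennreal_ofReal fun ω hω =>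
          ENNReal.ofReal_le_ofReal (Real.exp_le_exp.2 (mul_le_mul_of_nonneg_left (hAX ω hω) hh))) _

theorem lintegral_ofReal_exp_ne_zero {Ω : Type*} [MeasurableSpace Ω] {μ : Measure Ω} [NeZero μ]
    {X : Ω → ℝ} (hX : Measurable X) : ∫⁻ ω, ENNReal.ofReal (Real.exp (X ω)) ∂μ ≠ 0 :=
  ((lintegral_pos_iff_support hX.exp.ennreal_ofReal).2
    (by simp [Function.support, Real.exp_pos, NeZero.ne μ])).ne'

section IndependentIncrements

variable {Ω β : Type*} [mβ : MeasurableSpace β] {Y : ℕ → Ω → β}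

theorem measurable_iSup_comap_Iic_of_le {j k : ℕ} (hjk : j ≤ k) :
    Measurable[⨆ i ∈ Set.Iic k, mβ.comap (Y i)] (Y j) :=
  Measurable.of_comap_le (le_iSup₂ (f := fun i (_ : i ∈ Set.Iic k) => mβ.comap (Y i)) j hjk)

theorem measurableSet_disjointed_lt_sum_range {Y : ℕ → Ω → ℝ} (u : ℝ) (k : ℕ) :
    MeasurableSet[⨆ i ∈ Set.Iic k, MeasurableSpace.comap (Y i) inferInstance]
      (disjointed (fun n => {ω | u < ∑ j ∈ range (n + 1), Y j ω}) k) :=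
  measurableSet_disjointed_of_forall_le fun _ hn => measurableSet_lt measurable_const
    (Finset.measurable_sum _ fun _ hj =>
      measurable_iSup_comap_Iic_of_le ((mem_range_succ_iff.1 hj).trans hn))

variable [MeasurableSpace Ω] {μ : Measure Ω}

theorem lintegral_mul_prod_eq_of_iIndepFun (hY : ∀ i, Measurable (Y i)) (hind : iIndepFun Y μ)
    {k : ℕ} {F : Ω → ℝ≥0∞} (hF : Measurable[⨆ j ∈ Set.Iic k, mβ.comap (Y j)] F)
    {f : ℕ → β → ℝ≥0∞} (hf : ∀ j, Measurable (f j)) {s : Finset ℕ} (hs : ∀ j ∈ s, k < j) :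
    ∫⁻ ω, F ω * ∏ j ∈ s, f j (Y j ω) ∂μ = (∫⁻ ω, F ω ∂μ) * ∏ j ∈ s, ∫⁻ ω, f j (Y j ω) ∂μ := by
  have hle : ∀ j, mβ.comap (Y j) ≤ ‹MeasurableSpace Ω› := fun j => (hY j).comap_le
  have hpast_future : Indep (⨆ j ∈ Set.Iic k, mβ.comap (Y j)) (⨆ j ∈ Set.Ioi k, mβ.comap (Y j)) μ :=
    indep_iSup_of_disjoint hle ((iIndepFun_iff_iIndep _ _ _).1 hind) (Set.Iic_disjoint_Ioi le_rfl)
  have hfuture : Measurable[⨆ j ∈ Set.Ioi k, mβ.comap (Y j)] fun ω => ∏ j ∈ s, f j (Y j ω) :=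
    Finset.measurable_prod _ fun j hj => (hf j).comp <| Measurable.of_comap_le
      (le_iSup₂ (f := fun i (_ : i ∈ Set.Ioi k) => mβ.comap (Y i)) j (hs j hj))
  rw [lintegral_mul_eq_lintegral_mul_lintegral_of_independent_measurableSpace
      (iSup₂_le fun j _ => hle j) (iSup₂_le fun j _ => hle j) hpast_future hF hfuture]
  exact congrArg _ (lintegral_prod_eq_prod_lintegral_of_indepFun s _ (hind.comp f hf)
    fun j => (hf j).comp (hY j))

theorem sum_setLIntegral_prod_mul_prod_le (hY : ∀ i, Measurable (Y i)) (hind : iIndepFun Y μ)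
    {f : ℕ → β → ℝ≥0∞} (hf : ∀ j, Measurable (f j)) {A : ℕ → Set Ω}
    (hA : ∀ k, MeasurableSet[⨆ j ∈ Set.Iic k, mβ.comap (Y j)] (A k))
    (hdisj : Pairwise (Disjoint on A)) (m : ℕ) :
    ∑ k ∈ range (m + 1), (∫⁻ ω in A k, ∏ j ∈ range (k + 1), f j (Y j ω) ∂μ) *
        ∏ j ∈ Ico (k + 1) (m + 1), ∫⁻ ω, f j (Y j ω) ∂μ
      ≤ ∏ j ∈ range (m + 1), ∫⁻ ω, f j (Y j ω) ∂μ := by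
  set Z : ℕ → Ω → ℝ≥0∞ := fun n ω => ∏ j ∈ range n, f j (Y j ω)
  have hA' : ∀ k, MeasurableSet (A k) := fun k =>
    iSup₂_le (fun j _ => (hY j).comap_le) _ (hA k)
  have hstopped : ∀ k ∈ range (m + 1), (∫⁻ ω in A k, Z (k + 1) ω ∂μ) *
      ∏ j ∈ Ico (k + 1) (m + 1), ∫⁻ ω, f j (Y j ω) ∂μ = ∫⁻ ω in A k, Z (m + 1) ω ∂μ := by
    intro k hk
    have hZ : Measurable[⨆ j ∈ Set.Iic k, mβ.comap (Y j)] (Z (k + 1)) :=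
      Finset.measurable_prod _ fun j hj =>
        (hf j).comp (measurable_iSup_comap_Iic_of_le (mem_range_succ_iff.1 hj))
    rw [← lintegral_indicator (hA' k), ← lintegral_mul_prod_eq_of_iIndepFun hY hind
      (hZ.indicator (hA k)) hf fun j hj => (mem_Ico.1 hj).1, ← lintegral_indicator (hA' k)]
    refine lintegral_congr fun ω => ?_
    by_cases hω : ω ∈ A k
    · rw [Set.indicator_of_mem hω, Set.indicator_of_mem hω]
      exact prod_range_mul_prod_Ico _ (Nat.succ_le_succ (mem_range_succ_iff.1 hk))
    · rw [Set.indicator_of_notMem hω, Set.indicator_of_notMem hω, zero_mul]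
  calc _ = ∑ k ∈ range (m + 1), ∫⁻ ω in A k, Z (m + 1) ω ∂μ := sum_congr rfl hstopped
    _ = ∫⁻ ω in ⋃ k ∈ range (m + 1), A k, Z (m + 1) ω ∂μ :=
        (lintegral_biUnion_finset (fun _ _ _ _ hkl => hdisj hkl) (fun k _ => hA' k) _).symm
    _ ≤ ∫⁻ ω, Z (m + 1) ω ∂μ := setLIntegral_le_lintegral _ _
    _ = _ := lintegral_prod_eq_prod_lintegral_of_indepFun _ _ (hind.comp f hf)
        fun j => (hf j).comp (hY j)

theorem tsum_setLIntegral_prod_le_iSup_prod (hY : ∀ i, Measurable (Y i))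
    (hind : iIndepFun Y μ) {f : ℕ → β → ℝ≥0∞} (hf : ∀ j, Measurable (f j))
    (hf0 : ∀ j, ∫⁻ ω, f j (Y j ω) ∂μ ≠ 0) {A : ℕ → Set Ω}
    (hA : ∀ k, MeasurableSet[⨆ j ∈ Set.Iic k, mβ.comap (Y j)] (A k))
    (hdisj : Pairwise (Disjoint on A)) :
    ∑' k, ∫⁻ ω in A k, ∏ j ∈ range (k + 1), f j (Y j ω) ∂μ
      ≤ ⨆ k, ∏ j ∈ range (k + 1), ∫⁻ ω, f j (Y j ω) ∂μ :=
  ENNReal.tsum_le_iSup_prod_of_sum_mul_prod_le hf0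
    (sum_setLIntegral_prod_mul_prod_le hY hind hf hA hdisj)

end IndependentIncrements

theorem stmt2_general {Ω : Type*} [MeasurableSpace Ω] (P : Measure Ω) [IsProbabilityMeasure P]
    (Y : ℕ → Ω → ℝ)
    (hmeas : ∀ i, Measurable (Y i))
    (hindep : iIndepFun Y P)
    (S : ℕ → Ω → ℝ) (hS : ∀ k ω, S k ω = ∑ j ∈ Finset.range k, Y j ω)
    (u : ℝ) (h : ℝ) (hh : 0 ≤ h) :
    P (⋃ k : ℕ, {ω | u < S (k + 1) ω}) ≤
      ENNReal.ofReal (Real.exp (-h * u)) *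
        ⨆ k : ℕ, ∫⁻ ω, ENNReal.ofReal (Real.exp (h * S (k + 1) ω)) ∂P ∧
    (⨆ k : ℕ, ∫⁻ ω, ENNReal.ofReal (Real.exp (h * S (k + 1) ω)) ∂P) =
      ⨆ k : ℕ, ∏ j ∈ Finset.range (k + 1),
        ∫⁻ ω, ENNReal.ofReal (Real.exp (h * Y j ω)) ∂P := by
  obtain rfl : S = fun k ω => ∑ j ∈ range k, Y j ω := funext₂ hS
  set f : ℕ → ℝ → ℝ≥0∞ := fun _ x => ENNReal.ofReal (Real.exp (h * x))
  have hf : ∀ j, Measurable (f j) := fun _ => (measurable_id.const_mul h).exp.ennreal_ofReal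
  have hexp : ∀ k ω, ENNReal.ofReal (Real.exp (h * ∑ j ∈ range k, Y j ω))
      = ∏ j ∈ range k, f j (Y j ω) := fun k ω => by
    rw [mul_sum, Real.exp_sum, ENNReal.ofReal_prod_of_nonneg fun _ _ => (Real.exp_pos _).le]
  have hmgf : ∀ k, ∫⁻ ω, ENNReal.ofReal (Real.exp (h * ∑ j ∈ range k, Y j ω)) ∂P
      = ∏ j ∈ range k, ∫⁻ ω, f j (Y j ω) ∂P := fun k => by
    simp_rw [hexp]
    exact lintegral_prod_eq_prod_lintegral_of_indepFun _ _ (hindep.comp f hf)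
      fun j => (hf j).comp (hmeas j)
  have hsup := iSup_congr fun k => hmgf (k + 1)
  refine ⟨?_, hsup⟩
  set A := disjointed fun k => {ω | u < ∑ j ∈ range (k + 1), Y j ω}
  rw [hsup]
  calc P (⋃ k, {ω | u < ∑ j ∈ range (k + 1), Y j ω}) = P (⋃ k, A k) := by rw [iUnion_disjointed]
    _ ≤ ∑' k, P (A k) := measure_iUnion_le _
    _ ≤ ∑' k, ENNReal.ofReal (Real.exp (-h * u)) *
          ∫⁻ ω in A k, ∏ j ∈ range (k + 1), f j (Y j ω) ∂P := ENNReal.tsum_le_tsum fun k => by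
        simpa only [hexp] using measure_le_ofReal_exp_neg_mul_setLIntegral (A := A k)
          (Finset.measurable_sum (range (k + 1)) fun j _ => hmeas j) hh
          fun ω hω => le_of_lt (disjointed_subset _ k hω)
    _ = ENNReal.ofReal (Real.exp (-h * u)) *
          ∑' k, ∫⁻ ω in A k, ∏ j ∈ range (k + 1), f j (Y j ω) ∂P := ENNReal.tsum_mul_left
    _ ≤ _ := mul_le_mul_right (tsum_setLIntegral_prod_le_iSup_prod hmeas hindep hf
          (fun j => lintegral_ofReal_exp_ne_zero ((hmeas j).const_mul h))
          (measurableSet_disjointed_lt_sum_range u) (disjoint_disjointed _)) _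

/-- Theorem 1, main inequality.
`Y j` stands for `Y_{j+1}` and `S k = Y_1 + ⋯ + Y_k = ∑_{j < k} Y j`.
For mutually independent `Y_1, Y_2, …`, every `u > 0` and every `h ≥ 0`:
`P[sup_{k≥1} S_k > u] ≤ e^{-h u} · sup_{k≥1} E[e^{h S_k}]`, and moreover
`sup_{k≥1} E[e^{h S_k}] = sup_{k≥1} ∏_{j=1}^{k} E[e^{h Y_j}]`. -/
theorem stmt2 {Ω : Type*} [MeasurableSpace Ω] (P : Measure Ω) [IsProbabilityMeasure P]
    (Y : ℕ → Ω → ℝ)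
    (hmeas : ∀ i, Measurable (Y i))
    (hindep : iIndepFun Y P)
    (S : ℕ → Ω → ℝ) (hS : ∀ k ω, S k ω = ∑ j ∈ Finset.range k, Y j ω)
    (u : ℝ) (hu : 0 < u) (h : ℝ) (hh : 0 ≤ h) :
    P (⋃ k : ℕ, {ω | u < S (k + 1) ω}) ≤
      ENNReal.ofReal (Real.exp (-h * u)) *
        ⨆ k : ℕ, ∫⁻ ω, ENNReal.ofReal (Real.exp (h * S (k + 1) ω)) ∂P ∧
    (⨆ k : ℕ, ∫⁻ ω, ENNReal.ofReal (Real.exp (h * S (k + 1) ω)) ∂P) =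
      ⨆ k : ℕ, ∏ j ∈ Finset.range (k + 1),
        ∫⁻ ω, ENNReal.ofReal (Real.exp (h * Y j ω)) ∂P :=
  stmt2_general P Y hmeas hindep S hS u h hh
end

section
/- Let Y_1, Y_2, … be mutually independent real-valued random variables, S_k = Y_1 + ⋯ + Y_k, and let A = {h ≥ 0 : sup_{k≥1} E[e^{h S_k}] ≤ 1} (note 0 ∈ A). If A is bounded above and L(S_•) denotes its supremum, then for every u > 0: P[sup_{k≥1} S_k > u] ≤ e^{−L(S_•) u}. -/
/-!
Fix `h ∈ A` and let `τ` be the first time `k` with `u < S (k + 1)`; the event `{τ = k}` is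
`disjointed (fun k => {ω | u < S (k + 1) ω}) k`. For `k ≤ n`, the increment
`S (n + 1) - S (k + 1)` is independent of `Y 0, …, Y k`, so
`E[e^{h S (n+1)}; τ = k] = E[e^{h S (k+1)}; τ = k] · E[e^{h (S (n+1) - S (k+1))}]`.
The same factorisation over all of `Ω`, with `E[e^{h S (k+1)}] ≤ 1`, shows that the last factor
is at least `E[e^{h S (n+1)}]`. Summing over `k < n` gives
`e^{h u} P(τ < n) E[e^{h S (n+1)}] ≤ E[e^{h S (n+1)}]`, and this moment is positive and finite,
so `P(τ < n) ≤ e^{-h u}`. Let `n → ∞`, then take logarithms to pass to `h = sSup A`.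
-/

open MeasureTheory ProbabilityTheory Finset Real

theorem measurableSet_disjointed_of_le {Ω : Type*} {m : MeasurableSpace Ω} {s : ℕ → Set Ω}
    {n : ℕ} (hs : ∀ i ≤ n, MeasurableSet[m] (s i)) : MeasurableSet[m] (disjointed s n) := by
  rw [disjointed_eq_inter_compl]
  exact (hs n le_rfl).inter <| .iInter fun i => .iInter fun hi => (hs i hi.le).compl

theorem le_ofReal_exp_neg_sSup_mul {p : ENNReal} {A : Set ℝ} (hA : A.Nonempty) {u : ℝ}
    (hu : 0 < u) (hp : ∀ a ∈ A, p ≤ ENNReal.ofReal (exp (-a * u))) :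
    p ≤ ENNReal.ofReal (exp (-sSup A * u)) := by
  obtain ⟨a₀, ha₀⟩ := hA
  have hp_top : p ≠ ⊤ := ne_top_of_le_ne_top ENNReal.ofReal_ne_top (hp a₀ ha₀)
  rcases eq_or_ne p 0 with rfl | hp0
  · exact zero_le
  have hpos : 0 < p.toReal := ENNReal.toReal_pos hp0 hp_top
  have hlog : ∀ a ∈ A, log p.toReal ≤ -a * u := fun a ha =>
    (log_le_iff_le_exp hpos).2 <|
      (ENNReal.le_ofReal_iff_toReal_le hp_top (exp_nonneg _)).1 (hp a ha)
  have hsSup : sSup A ≤ -log p.toReal / u :=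
    csSup_le ⟨a₀, ha₀⟩ fun a ha => by rw [le_div_iff₀ hu]; linarith [hlog a ha]
  rw [ENNReal.le_ofReal_iff_toReal_le hp_top (exp_nonneg _), ← log_le_iff_le_exp hpos]
  rw [le_div_iff₀ hu] at hsSup
  linarith

theorem measurable_iSup_gt_sum_Ico {Ω : Type*} {Y : ℕ → Ω → ℝ} (k n : ℕ) :
    Measurable[⨆ j > k, MeasurableSpace.comap (Y j) inferInstance]
      fun ω => ∑ j ∈ Ico (k + 1) n, Y j ω :=
  Finset.measurable_sum _ fun j hj =>
    (comap_measurable (Y j)).mono (le_iSup₂_of_le j (mem_Ico.1 hj).1 le_rfl) le_rfl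

section

variable {Ω : Type*} [MeasurableSpace Ω] {P : Measure Ω} {Y : ℕ → Ω → ℝ}

theorem ProbabilityTheory.iIndepFun.indep_natural_iSup_gt (hmeas : ∀ i, Measurable (Y i))
    (hindep : iIndepFun Y P) (k : ℕ) :
    Indep (Filtration.natural Y (fun i => (hmeas i).stronglyMeasurable) k)
      (⨆ j > k, MeasurableSpace.comap (Y j) inferInstance) P :=
  indep_iSup_of_disjoint (fun i => (hmeas i).comap_le) hindep.iIndep
    (Set.disjoint_left.2 fun _ hj hj' => Nat.lt_irrefl _ (lt_of_le_of_lt hj hj'))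

theorem measurable_natural_sum_range (hmeas : ∀ i, Measurable (Y i)) (k : ℕ) :
    Measurable[Filtration.natural Y (fun i => (hmeas i).stronglyMeasurable) k]
      fun ω => ∑ j ∈ range (k + 1), Y j ω :=
  Finset.measurable_sum _ fun j hj =>
    (Filtration.stronglyAdapted_natural (fun i => (hmeas i).stronglyMeasurable) j).measurable.mono
      (Filtration.mono _ (Nat.lt_succ_iff.1 (mem_range.1 hj))) le_rfl

theorem setLIntegral_exp_mul_sum_range_eq (hmeas : ∀ i, Measurable (Y i))
    (hindep : iIndepFun Y P) (h : ℝ) {k n : ℕ} (hkn : k ≤ n) {B : Set Ω}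
    (hB : MeasurableSet[Filtration.natural Y (fun i => (hmeas i).stronglyMeasurable) k] B) :
    ∫⁻ ω in B, ENNReal.ofReal (exp (h * ∑ j ∈ range (n + 1), Y j ω)) ∂P =
      (∫⁻ ω in B, ENNReal.ofReal (exp (h * ∑ j ∈ range (k + 1), Y j ω)) ∂P) *
        ∫⁻ ω, ENNReal.ofReal (exp (h * ∑ j ∈ Ico (k + 1) (n + 1), Y j ω)) ∂P := by
  set ℱ := Filtration.natural Y (fun i => (hmeas i).stronglyMeasurable)
  have hsplit : ∀ ω, ENNReal.ofReal (exp (h * ∑ j ∈ range (n + 1), Y j ω)) =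
      ENNReal.ofReal (exp (h * ∑ j ∈ range (k + 1), Y j ω)) *
        ENNReal.ofReal (exp (h * ∑ j ∈ Ico (k + 1) (n + 1), Y j ω)) := fun ω => by
    rw [← sum_range_add_sum_Ico _ (by omega : k + 1 ≤ n + 1), mul_add, exp_add,
      ENNReal.ofReal_mul (exp_nonneg _)]
  simp only [← lintegral_indicator (ℱ.le k B hB), hsplit, Set.indicator_mul_left]
  exact lintegral_mul_eq_lintegral_mul_lintegral_of_independent_measurableSpace (ℱ.le k)
    (iSup₂_le fun j _ => (hmeas j).comap_le) (hindep.indep_natural_iSup_gt hmeas k)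
    (((measurable_natural_sum_range hmeas k).const_mul h).exp.ennreal_ofReal.indicator hB)
    ((measurable_iSup_gt_sum_Ico k (n + 1)).const_mul h).exp.ennreal_ofReal

theorem measurableSet_natural_disjointed_lt_sum_range (hmeas : ∀ i, Measurable (Y i)) (u : ℝ)
    (k : ℕ) :
    MeasurableSet[Filtration.natural Y (fun i => (hmeas i).stronglyMeasurable) k]
      (disjointed (fun k => {ω | u < ∑ j ∈ range (k + 1), Y j ω}) k) :=
  measurableSet_disjointed_of_le fun i hi =>
    measurableSet_lt measurable_const
      ((measurable_natural_sum_range hmeas i).mono (Filtration.mono _ hi) le_rfl)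

theorem lintegral_ofReal_exp_ne_zero_s3 [NeZero P] {f : Ω → ℝ} (hf : Measurable f) :
    ∫⁻ ω, ENNReal.ofReal (exp (f ω)) ∂P ≠ 0 := by
  refine ((lintegral_pos_iff_support hf.exp.ennreal_ofReal).2 ?_).ne'
  simp [Function.support, exp_pos, NeZero.ne P]

theorem mul_measure_disjointed_mul_lintegral_le (hmeas : ∀ i, Measurable (Y i))
    (hindep : iIndepFun Y P) {h : ℝ} (hh : 0 ≤ h)
    (hE : ∀ n, ∫⁻ ω, ENNReal.ofReal (exp (h * ∑ j ∈ range (n + 1), Y j ω)) ∂P ≤ 1)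
    (u : ℝ) {k n : ℕ} (hkn : k ≤ n) :
    ENNReal.ofReal (exp (h * u)) *
        P (disjointed (fun k => {ω | u < ∑ j ∈ range (k + 1), Y j ω}) k) *
        ∫⁻ ω, ENNReal.ofReal (exp (h * ∑ j ∈ range (n + 1), Y j ω)) ∂P ≤
      ∫⁻ ω in disjointed (fun k => {ω | u < ∑ j ∈ range (k + 1), Y j ω}) k,
        ENNReal.ofReal (exp (h * ∑ j ∈ range (n + 1), Y j ω)) ∂P := by
  have hB := measurableSet_natural_disjointed_lt_sum_range hmeas u k
  set B := disjointed (fun k => {ω | u < ∑ j ∈ range (k + 1), Y j ω}) k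
  have hexp_le : ENNReal.ofReal (exp (h * u)) * P B ≤
      ∫⁻ ω in B, ENNReal.ofReal (exp (h * ∑ j ∈ range (k + 1), Y j ω)) ∂P := by
    rw [← setLIntegral_const]
    refine setLIntegral_mono' (Filtration.le _ k _ hB) fun ω hω => ?_
    exact ENNReal.ofReal_le_ofReal <| exp_le_exp.2 <|
      mul_le_mul_of_nonneg_left (disjointed_subset _ k hω).le hh
  have hmoment_le : ∫⁻ ω, ENNReal.ofReal (exp (h * ∑ j ∈ range (n + 1), Y j ω)) ∂P ≤
      ∫⁻ ω, ENNReal.ofReal (exp (h * ∑ j ∈ Ico (k + 1) (n + 1), Y j ω)) ∂P := by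
    have := setLIntegral_exp_mul_sum_range_eq (P := P) hmeas hindep h hkn MeasurableSet.univ
    rw [Measure.restrict_univ] at this
    rw [this]
    exact mul_le_of_le_one_left zero_le (hE k)
  rw [setLIntegral_exp_mul_sum_range_eq hmeas hindep h hkn hB]
  exact mul_le_mul' hexp_le hmoment_le

theorem sum_range_mul_measure_disjointed_le_one [NeZero P]
    (hmeas : ∀ i, Measurable (Y i)) (hindep : iIndepFun Y P) {h : ℝ} (hh : 0 ≤ h)
    (hE : ∀ n, ∫⁻ ω, ENNReal.ofReal (exp (h * ∑ j ∈ range (n + 1), Y j ω)) ∂P ≤ 1)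
    (u : ℝ) (n : ℕ) :
    ∑ k ∈ range n, ENNReal.ofReal (exp (h * u)) *
      P (disjointed (fun k => {ω | u < ∑ j ∈ range (k + 1), Y j ω}) k) ≤ 1 := by
  set B := disjointed (fun k => {ω | u < ∑ j ∈ range (k + 1), Y j ω})
  set M := ∫⁻ ω, ENNReal.ofReal (exp (h * ∑ j ∈ range (n + 1), Y j ω)) ∂P
  have hM0 : M ≠ 0 := lintegral_ofReal_exp_ne_zero_s3
    ((Finset.measurable_sum _ fun j _ => hmeas j).const_mul h)
  have hMtop : M ≠ ⊤ := ne_top_of_le_ne_top ENNReal.one_ne_top (hE n)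
  refine (ENNReal.mul_le_mul_iff_left hM0 hMtop).1 ?_
  calc (∑ k ∈ range n, ENNReal.ofReal (exp (h * u)) * P (B k)) * M
      ≤ ∑ k ∈ range n,
          ∫⁻ ω in B k, ENNReal.ofReal (exp (h * ∑ j ∈ range (n + 1), Y j ω)) ∂P := by
        rw [sum_mul]
        exact sum_le_sum fun k hk =>
          mul_measure_disjointed_mul_lintegral_le hmeas hindep hh hE u (mem_range.1 hk).le
    _ = ∫⁻ ω in ⋃ k ∈ range n, B k,
          ENNReal.ofReal (exp (h * ∑ j ∈ range (n + 1), Y j ω)) ∂P :=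
        (lintegral_biUnion_finset ((disjoint_disjointed _).set_pairwise _) (fun k _ =>
          Filtration.le _ k _ (measurableSet_natural_disjointed_lt_sum_range hmeas u k)) _).symm
    _ ≤ M := setLIntegral_le_lintegral _ _
    _ = 1 * M := (one_mul M).symm

theorem measure_iUnion_lt_sum_range_le [NeZero P]
    (hmeas : ∀ i, Measurable (Y i)) (hindep : iIndepFun Y P) {h : ℝ} (hh : 0 ≤ h)
    (hE : ∀ n, ∫⁻ ω, ENNReal.ofReal (exp (h * ∑ j ∈ range (n + 1), Y j ω)) ∂P ≤ 1)
    (u : ℝ) :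
    P (⋃ k, {ω | u < ∑ j ∈ range (k + 1), Y j ω}) ≤ ENNReal.ofReal (exp (-h * u)) := by
  rw [neg_mul, exp_neg, ENNReal.ofReal_inv_of_pos (exp_pos _), ENNReal.le_inv_iff_mul_le,
    ← iUnion_disjointed, measure_iUnion (disjoint_disjointed _) fun k =>
      Filtration.le _ k _ (measurableSet_natural_disjointed_lt_sum_range hmeas u k),
    mul_comm, ← ENNReal.tsum_mul_left]
  exact ENNReal.tsum_le_of_sum_range_le
    (sum_range_mul_measure_disjointed_le_one hmeas hindep hh hE u)

end

theorem stmt3_general {Ω : Type*} [MeasurableSpace Ω] (P : Measure Ω) [IsProbabilityMeasure P]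
    (Y : ℕ → Ω → ℝ)
    (hmeas : ∀ i, Measurable (Y i))
    (hindep : iIndepFun Y P)
    (S : ℕ → Ω → ℝ) (hS : ∀ k ω, S k ω = ∑ j ∈ Finset.range k, Y j ω)
    (A : Set ℝ)
    (hA : A = {h : ℝ | 0 ≤ h ∧
      (⨆ k : ℕ, ∫⁻ ω, ENNReal.ofReal (Real.exp (h * S (k + 1) ω)) ∂P) ≤ 1})
    (u : ℝ) (hu : 0 < u) :
    P (⋃ k : ℕ, {ω | u < S (k + 1) ω}) ≤ ENNReal.ofReal (Real.exp (-(sSup A) * u)) := by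
  obtain rfl : S = fun k ω => ∑ j ∈ range k, Y j ω := funext₂ hS
  have hA0 : (0 : ℝ) ∈ A := hA ▸ ⟨le_rfl, iSup_le fun k => by simp⟩
  refine le_ofReal_exp_neg_sSup_mul ⟨0, hA0⟩ hu fun h hh => ?_
  rw [hA] at hh
  exact measure_iUnion_lt_sum_range_le hmeas hindep hh.1 (fun n => (le_iSup _ n).trans hh.2) u

/-- Theorem 1, Lundberg inequality with adjustment coefficient `L(S_•)`.
`Y j` stands for `Y_{j+1}` and `S k = Y_1 + ⋯ + Y_k = ∑_{j < k} Y j`.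
Let `A = {h ≥ 0 : sup_{k≥1} E[e^{h S_k}] ≤ 1}` (it contains `0`).  If `A` is bounded
above and `L(S_•) = sSup A`, then `P[sup_{k≥1} S_k > u] ≤ e^{-L(S_•) u}` for all `u > 0`. -/
theorem stmt3 {Ω : Type*} [MeasurableSpace Ω] (P : Measure Ω) [IsProbabilityMeasure P]
    (Y : ℕ → Ω → ℝ)
    (hmeas : ∀ i, Measurable (Y i))
    (hindep : iIndepFun Y P)
    (S : ℕ → Ω → ℝ) (hS : ∀ k ω, S k ω = ∑ j ∈ Finset.range k, Y j ω)
    (A : Set ℝ)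
    (hA : A = {h : ℝ | 0 ≤ h ∧
      (⨆ k : ℕ, ∫⁻ ω, ENNReal.ofReal (Real.exp (h * S (k + 1) ω)) ∂P) ≤ 1})
    (hbdd : BddAbove A)
    (u : ℝ) (hu : 0 < u) :
    P (⋃ k : ℕ, {ω | u < S (k + 1) ω}) ≤ ENNReal.ofReal (Real.exp (-(sSup A) * u)) :=
  stmt3_general P Y hmeas hindep S hS A hA u hu
end

section
/- Let Y_1, Y_2, … be mutually independent real-valued random variables, S_k = Y_1 + ⋯ + Y_k. If h ≥ 0 satisfies E[e^{h Y_j}] ≤ 1 for every j ≥ 1, then for every u > 0: P[sup_{k≥1} S_k > u] ≤ e^{−hu} · E[e^{h Y_1}] ≤ e^{−hu}. In particular every such h also satisfies sup_{k≥1} E[e^{h S_k}] ≤ 1. -/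
/-!
`M k = e^{h S_{k+1}} = ∏_{j ≤ k} e^{h Y_j}` is a nonnegative supermartingale for the natural
filtration of `Y`, since each new factor is independent of the past and has mean at most `1`.
Ville's maximal inequality `c · P[∃ k, c ≤ M k] ≤ E[M 0]` with `c = e^{h u}` gives the tail bound,
and `E[M k] ≤ E[M 0] = E[e^{h Y_1}] ≤ 1` gives the moment bound.
-/

open MeasureTheory ProbabilityTheory
open scoped ENNReal

/-- The `ℝ≥0∞`-valued counterpart of `MeasureTheory.Supermartingale`: no integrability is needed,
and `E[M (k+1) | ℱ k] ≤ M k` is expressed through integrals over `ℱ k`-measurable sets. -/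
structure ENNRealSupermartingale {Ω : Type*} {m : MeasurableSpace Ω} (M : ℕ → Ω → ℝ≥0∞)
    (ℱ : Filtration ℕ m) (P : Measure Ω) : Prop where
  measurable : ∀ k, Measurable[ℱ k] (M k)
  setLIntegral_succ_le : ∀ k s, MeasurableSet[ℱ k] s →
    ∫⁻ ω in s, M (k + 1) ω ∂P ≤ ∫⁻ ω in s, M k ω ∂P

namespace ENNRealSupermartingale

variable {Ω : Type*} {m : MeasurableSpace Ω} {M : ℕ → Ω → ℝ≥0∞} {ℱ : Filtration ℕ m}
  {P : Measure Ω}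

theorem lintegral_le_lintegral_zero (hM : ENNRealSupermartingale M ℱ P) (k : ℕ) :
    ∫⁻ ω, M k ω ∂P ≤ ∫⁻ ω, M 0 ω ∂P := by
  induction k with
  | zero => rfl
  | succ k ih =>
    calc ∫⁻ ω, M (k + 1) ω ∂P ≤ ∫⁻ ω, M k ω ∂P := by
          simpa using hM.setLIntegral_succ_le k Set.univ MeasurableSet.univ
      _ ≤ ∫⁻ ω, M 0 ω ∂P := ih

theorem measurableSet_forall_lt (hM : ENNRealSupermartingale M ℱ P) (c : ℝ≥0∞) {n k : ℕ}
    (hkn : k ≤ n + 1) : MeasurableSet[ℱ n] {ω | ∀ j < k, M j ω < c} := by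
  simp only [Set.ofPred_forall]
  refine MeasurableSet.iInter fun j => MeasurableSet.iInter fun hj => ?_
  exact measurableSet_lt ((hM.measurable j).mono (ℱ.mono (by omega)) le_rfl) measurable_const

/-- Optional stopping: with `τ` the first time `M` reaches `c`, the left side is at most
`E[M (τ ∧ n)] ≤ E[M 0]`. -/
theorem mul_measure_compl_add_setLIntegral_le (hM : ENNRealSupermartingale M ℱ P) (c : ℝ≥0∞)
    (n : ℕ) :
    c * P {ω | ∀ k < n, M k ω < c}ᶜ + ∫⁻ ω in {ω | ∀ k < n, M k ω < c}, M n ω ∂P ≤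
      ∫⁻ ω, M 0 ω ∂P := by
  induction n with
  | zero => simp
  | succ n ih =>
    set alive := {ω | ∀ k < n, M k ω < c}
    set F := {ω | c ≤ M n ω}
    have hF : MeasurableSet[ℱ n] F := measurableSet_le measurable_const (hM.measurable n)
    have halive : MeasurableSet[ℱ n] alive := hM.measurableSet_forall_lt c (by omega)
    have hsucc : {ω | ∀ k < n + 1, M k ω < c} = alive \ F := by
      ext ω
      simp only [alive, F, Set.mem_ofPred_eq, Set.mem_sdiff, not_le, Nat.forall_lt_succ_right]
    have hcompl : (alive \ F)ᶜ = aliveᶜ ∪ (alive ∩ F) := by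
      ext ω; by_cases ω ∈ alive <;> simp [*]
    have hstopped : c * P (alive ∩ F) ≤ ∫⁻ ω in alive ∩ F, M n ω ∂P := by
      rw [← setLIntegral_const]
      exact setLIntegral_mono ((hM.measurable n).mono (ℱ.le n) le_rfl) fun ω hω => hω.2
    have hrunning : ∫⁻ ω in alive \ F, M (n + 1) ω ∂P ≤ ∫⁻ ω in alive \ F, M n ω ∂P :=
      hM.setLIntegral_succ_le n _ (halive.diff hF)
    rw [hsucc, hcompl, measure_union (disjoint_compl_left.mono_right Set.inter_subset_left)
      (ℱ.le n _ (halive.inter hF))]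
    calc c * (P aliveᶜ + P (alive ∩ F)) + ∫⁻ ω in alive \ F, M (n + 1) ω ∂P
        = c * P aliveᶜ + (c * P (alive ∩ F) + ∫⁻ ω in alive \ F, M (n + 1) ω ∂P) := by
          rw [mul_add, add_assoc]
      _ ≤ c * P aliveᶜ + (∫⁻ ω in alive ∩ F, M n ω ∂P + ∫⁻ ω in alive \ F, M n ω ∂P) := by
          gcongr
      _ = c * P aliveᶜ + ∫⁻ ω in alive, M n ω ∂P := by
          rw [lintegral_inter_add_sdiff _ _ (ℱ.le n _ hF)]
      _ ≤ ∫⁻ ω, M 0 ω ∂P := ih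

theorem mul_measure_iUnion_le (hM : ENNRealSupermartingale M ℱ P) (c : ℝ≥0∞) :
    c * P (⋃ k, {ω | c ≤ M k ω}) ≤ ∫⁻ ω, M 0 ω ∂P := by
  have hunion : (⋃ k, {ω | c ≤ M k ω}) = ⋃ n, {ω | ∀ k < n, M k ω < c}ᶜ := by
    ext ω
    simpa using ⟨fun ⟨k, hk⟩ => ⟨k + 1, k, k.lt_succ_self, hk⟩, fun ⟨_, k, _, hk⟩ => ⟨k, hk⟩⟩
  have hmono : Monotone fun n => {ω | ∀ k < n, M k ω < c}ᶜ :=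
    fun a b hab => Set.compl_subset_compl.2 fun ω hω k hk => hω k (hk.trans_le hab)
  rw [hunion, hmono.measure_iUnion, ENNReal.mul_iSup]
  exact iSup_le fun n => le_add_right le_rfl |>.trans (hM.mul_measure_compl_add_setLIntegral_le c n)

end ENNRealSupermartingale

namespace ProbabilityTheory

variable {Ω ι β : Type*} {m : MeasurableSpace Ω} {P : Measure Ω} [LinearOrder ι]
  [MeasurableSpace β] [NormedAddCommGroup β] [BorelSpace β] {f : ι → Ω → β}

theorem iIndepFun.lintegral_mul_comp_eq_of_lt (hf : ∀ i, StronglyMeasurable (f i))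
    (hindep : iIndepFun f P) {i j : ι} (hij : i < j) {F : Ω → ℝ≥0∞}
    (hF : Measurable[Filtration.natural f hf i] F) {g : β → ℝ≥0∞} (hg : Measurable g) :
    ∫⁻ ω, F ω * g (f j ω) ∂P = (∫⁻ ω, F ω ∂P) * ∫⁻ ω, g (f j ω) ∂P :=
  lintegral_mul_eq_lintegral_mul_lintegral_of_independent_measurableSpace (Filtration.le _ i)
    (hf j).measurable.comap_le (hindep.indep_comap_natural_of_lt hf hij).symm hF
    (hg.comp (comap_measurable _))

end ProbabilityTheory

section Products

variable {Ω β : Type*} {m : MeasurableSpace Ω} {P : Measure Ω}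
  [MeasurableSpace β] [NormedAddCommGroup β] [BorelSpace β] {Y : ℕ → Ω → β}

theorem ennrealSupermartingale_prod (hY : ∀ i, StronglyMeasurable (Y i))
    (hindep : iIndepFun Y P) {g : β → ℝ≥0∞} (hg : Measurable g)
    (hg_le : ∀ k, ∫⁻ ω, g (Y (k + 1) ω) ∂P ≤ 1) :
    ENNRealSupermartingale (fun k ω => ∏ j ∈ Finset.range (k + 1), g (Y j ω))
      (Filtration.natural Y hY) P := by
  have hmeas : ∀ k, Measurable[Filtration.natural Y hY k]
      fun ω => ∏ j ∈ Finset.range (k + 1), g (Y j ω) := fun k =>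
    Finset.measurable_prod _ fun j hj => hg.comp (((Filtration.stronglyAdapted_natural hY j).mono
      (Filtration.mono _ (Nat.lt_succ_iff.1 (Finset.mem_range.1 hj)))).measurable)
  refine ⟨hmeas, fun k s hs => ?_⟩
  have hs' : MeasurableSet s := Filtration.le _ k s hs
  calc ∫⁻ ω in s, ∏ j ∈ Finset.range (k + 2), g (Y j ω) ∂P
      = ∫⁻ ω, s.indicator (fun ω => ∏ j ∈ Finset.range (k + 1), g (Y j ω)) ω
          * g (Y (k + 1) ω) ∂P := by
        rw [← lintegral_indicator hs']
        simp only [Finset.prod_range_succ _ (k + 1), Set.indicator_mul_left]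
    _ = (∫⁻ ω in s, ∏ j ∈ Finset.range (k + 1), g (Y j ω) ∂P) * ∫⁻ ω, g (Y (k + 1) ω) ∂P := by
        rw [hindep.lintegral_mul_comp_eq_of_lt hY k.lt_succ_self ((hmeas k).indicator hs) hg,
          lintegral_indicator hs']
    _ ≤ ∫⁻ ω in s, ∏ j ∈ Finset.range (k + 1), g (Y j ω) ∂P :=
        mul_le_of_le_one_right' (hg_le k)

end Products

theorem stmt4_general {Ω : Type*} [MeasurableSpace Ω] (P : Measure Ω)
    (Y : ℕ → Ω → ℝ)
    (hmeas : ∀ i, Measurable (Y i))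
    (hindep : iIndepFun Y P)
    (S : ℕ → Ω → ℝ) (hS : ∀ k ω, S k ω = ∑ j ∈ Finset.range k, Y j ω)
    (h : ℝ) (hh : 0 ≤ h)
    (hbound : ∀ j : ℕ, ∫⁻ ω, ENNReal.ofReal (Real.exp (h * Y j ω)) ∂P ≤ 1) :
    (∀ u : ℝ, 0 < u →
      P (⋃ k : ℕ, {ω | u < S (k + 1) ω}) ≤
        ENNReal.ofReal (Real.exp (-h * u)) *
          ∫⁻ ω, ENNReal.ofReal (Real.exp (h * Y 0 ω)) ∂P ∧
      ENNReal.ofReal (Real.exp (-h * u)) *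
          (∫⁻ ω, ENNReal.ofReal (Real.exp (h * Y 0 ω)) ∂P) ≤
        ENNReal.ofReal (Real.exp (-h * u))) ∧
    (⨆ k : ℕ, ∫⁻ ω, ENNReal.ofReal (Real.exp (h * S (k + 1) ω)) ∂P) ≤ 1 := by
  obtain rfl : S = fun k ω => ∑ j ∈ Finset.range k, Y j ω := funext fun k => funext (hS k)
  set g : ℝ → ℝ≥0∞ := fun y => ENNReal.ofReal (Real.exp (h * y))
  have hexp : ∀ k ω, ENNReal.ofReal (Real.exp (h * ∑ j ∈ Finset.range (k + 1), Y j ω)) =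
      ∏ j ∈ Finset.range (k + 1), g (Y j ω) := fun k ω => by
    rw [Finset.mul_sum, Real.exp_sum, ENNReal.ofReal_prod_of_nonneg fun j _ => (Real.exp_pos _).le]
  have hg : Measurable g := by fun_prop
  have hM := ennrealSupermartingale_prod (fun i => (hmeas i).stronglyMeasurable) hindep hg
    fun k => hbound (k + 1)
  have hM0 : ∫⁻ ω, ∏ j ∈ Finset.range (0 + 1), g (Y j ω) ∂P = ∫⁻ ω, g (Y 0 ω) ∂P := by simp
  simp only [hexp]
  refine ⟨fun u _ => ⟨?_, mul_le_of_le_one_right' (hbound 0)⟩, iSup_le fun k => ?_⟩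
  · calc P (⋃ k : ℕ, {ω | u < ∑ j ∈ Finset.range (k + 1), Y j ω})
        ≤ P (⋃ k, {ω | ENNReal.ofReal (Real.exp (h * u)) ≤
            ∏ j ∈ Finset.range (k + 1), g (Y j ω)}) :=
          measure_mono <| Set.iUnion_mono fun k ω hω => (hexp k ω).le.trans' <|
            ENNReal.ofReal_le_ofReal (Real.exp_le_exp.2 (mul_le_mul_of_nonneg_left hω.le hh))
      _ ≤ ENNReal.ofReal (Real.exp (-h * u)) * ∫⁻ ω, g (Y 0 ω) ∂P := by
          rw [neg_mul, Real.exp_neg, ENNReal.ofReal_inv_of_pos (Real.exp_pos _), ← hM0,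
            ← ENNReal.mul_le_iff_le_inv (by simp [Real.exp_pos]) ENNReal.ofReal_ne_top]
          exact hM.mul_measure_iUnion_le _
  · exact (hM.lintegral_le_lintegral_zero k).trans (hM0 ▸ hbound 0)

/-- Corollary 1.
`Y j` stands for `Y_{j+1}` and `S k = Y_1 + ⋯ + Y_k = ∑_{j < k} Y j`.
If `h ≥ 0` satisfies `E[e^{h Y_j}] ≤ 1` for every `j ≥ 1`, then for every `u > 0`:
`P[sup_{k≥1} S_k > u] ≤ e^{-h u} · E[e^{h Y_1}] ≤ e^{-h u}`, and in particular
`sup_{k≥1} E[e^{h S_k}] ≤ 1`. -/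
theorem stmt4 {Ω : Type*} [MeasurableSpace Ω] (P : Measure Ω) [IsProbabilityMeasure P]
    (Y : ℕ → Ω → ℝ)
    (hmeas : ∀ i, Measurable (Y i))
    (hindep : iIndepFun Y P)
    (S : ℕ → Ω → ℝ) (hS : ∀ k ω, S k ω = ∑ j ∈ Finset.range k, Y j ω)
    (h : ℝ) (hh : 0 ≤ h)
    (hbound : ∀ j : ℕ, ∫⁻ ω, ENNReal.ofReal (Real.exp (h * Y j ω)) ∂P ≤ 1) :
    (∀ u : ℝ, 0 < u →
      P (⋃ k : ℕ, {ω | u < S (k + 1) ω}) ≤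
        ENNReal.ofReal (Real.exp (-h * u)) *
          ∫⁻ ω, ENNReal.ofReal (Real.exp (h * Y 0 ω)) ∂P ∧
      ENNReal.ofReal (Real.exp (-h * u)) *
          (∫⁻ ω, ENNReal.ofReal (Real.exp (h * Y 0 ω)) ∂P) ≤
        ENNReal.ofReal (Real.exp (-h * u))) ∧
    (⨆ k : ℕ, ∫⁻ ω, ENNReal.ofReal (Real.exp (h * S (k + 1) ω)) ∂P) ≤ 1 :=
  stmt4_general P Y hmeas hindep S hS h hh hbound
end

section
/- Let T : ℕ → ℝ satisfy T(0) = 0, T(k) < T(k+1) for all k, and T(n) → ∞, and let R : ℝ → ℝ be a function such that for every k ≥ 1: R is monotone (either nondecreasing or nonincreasing) on the half-open interval [T(k−1), T(k)), and R(T(k)) ≤ limsup_{t → T(k)⁻} R(t). Then there exists t ≥ 0 with R(t) < 0 if and only if there exists k ≥ 0 with R(T(k)) < 0. -/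
open Filter

/-- pathwise reduction of ruin to the claim-arrival times.
`T : ℕ → ℝ` with `T 0 = 0`, strictly increasing, tending to `∞`; `R : ℝ → ℝ`
is monotone (nondecreasing or nonincreasing) on every interval `[T k, T (k+1))`
and satisfies `R (T (k+1)) ≤ limsup_{t → T(k+1)⁻} R t` (the limit superior taken
in the extended reals along the filter of approach from the left).
Then `R` takes a negative value at some `t ≥ 0` iff it takes a negative value at
some `T k`. -/
theorem stmt6 (T : ℕ → ℝ) (hT0 : T 0 = 0) (hTmono : ∀ k : ℕ, T k < T (k + 1))
    (hTtop : Tendsto T atTop atTop)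
    (R : ℝ → ℝ)
    (hmono : ∀ k : ℕ, MonotoneOn R (Set.Ico (T k) (T (k + 1))) ∨
      AntitoneOn R (Set.Ico (T k) (T (k + 1))))
    (hjump : ∀ k : ℕ, (R (T (k + 1)) : EReal) ≤
      Filter.limsup (fun t => (R t : EReal)) (nhdsWithin (T (k + 1)) (Set.Iio (T (k + 1))))) :
    (∃ t : ℝ, 0 ≤ t ∧ R t < 0) ↔ (∃ k : ℕ, R (T k) < 0) := by
  classical
  constructor
  · rintro ⟨t, ht0, htneg⟩
    have hex : ∃ n, t < T n := (hTtop.eventually_gt_atTop t).exists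
    have hmlt : t < T (Nat.find hex) := Nat.find_spec hex
    have hmpos : Nat.find hex ≠ 0 := by
      intro h0
      rw [h0, hT0] at hmlt
      linarith
    obtain ⟨k, hk⟩ := Nat.exists_eq_succ_of_ne_zero hmpos
    rw [hk] at hmlt
    have hkt : T k ≤ t := le_of_not_gt (Nat.find_min hex (hk ▸ Nat.lt_succ_self k))
    by_cases hRk : R (T k) < 0
    · exact ⟨k, hRk⟩
    push_neg at hRk
    have htmem : t ∈ Set.Ico (T k) (T (k + 1)) := ⟨hkt, hmlt⟩
    rcases hmono k with hmon | hant
    · exact absurd (hmon (Set.left_mem_Ico.2 (hTmono k)) htmem hkt) (by linarith)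
    · have hev : ∀ᶠ s in nhdsWithin (T (k + 1)) (Set.Iio (T (k + 1))),
          (R s : EReal) ≤ (R t : EReal) := by
        filter_upwards [Ioo_mem_nhdsLT_of_mem ⟨hmlt, le_refl _⟩] with s hs
        exact_mod_cast hant htmem ⟨le_trans hkt hs.1.le, hs.2⟩ hs.1.le
      have hls : Filter.limsup (fun s => (R s : EReal))
          (nhdsWithin (T (k + 1)) (Set.Iio (T (k + 1)))) ≤ (R t : EReal) :=
        Filter.limsup_le_of_le (by isBoundedDefault) hev
      have hle : (R (T (k + 1)) : EReal) ≤ (R t : EReal) := (hjump k).trans hls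
      have hle' : R (T (k + 1)) ≤ R t := by exact_mod_cast hle
      exact ⟨k + 1, by linarith⟩
  · rintro ⟨k, hk⟩
    refine ⟨T k, ?_, hk⟩
    have : T 0 ≤ T k := (strictMono_nat_of_lt_succ hTmono).monotone (Nat.zero_le k)
    linarith [hT0 ▸ this]
end

section
/- Let (α_j)_{j≥1} and (r_j)_{j≥1} be real sequences with α_j ≥ r_j ≥ 0 for all j, and let (y_j)_{j≥1} be arbitrary reals. Set v_k = ∏_{j=1}^{k} 1/(1 + r_j) and v_k^* = ∏_{j=1}^{k} 1/(1 + α_j) (with v_0 = v_0^* = 1), and define S_k^{**} = Σ_{j=1}^{k} v_{j−1}^* y_j and S_k^{*} = Σ_{j=1}^{k} v_{j−1} y_j, with S_0^{**} = S_0^{*} = 0. Then for every n ≥ 0: max_{0≤k≤n} S_k^{**} ≤ max_{0≤k≤n} S_k^{*}. -/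
/-!
The ratio `w k = v* k / v k = ∏_{j ≤ k} (1 + r_j) / (1 + α_j)` is nonincreasing with values in
`[0, 1]` and `w 0 = 1`, and `S**_k = ∑_{j < k} w_j (S*_{j+1} - S*_j)`. Summed by parts, this is a
combination of `S*_1, …, S*_k` with nonnegative weights of total mass at most `w 0 = 1`, hence at
most `M = max_{i ≤ n} S*_i ≥ S*_0 = 0`. The induction carries the bound `w_k S*_k + (1 - w_k) M`.
-/

open Finset

section DiscountedSums

variable {c S : ℕ → ℝ} {M : ℝ}

theorem sum_range_mul_sub_le_mul_add_one_sub_mul (hc : Antitone c) (hc0 : c 0 ≤ 1)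
    (hS0 : S 0 = 0) (k : ℕ) (hSM : ∀ i ≤ k, S i ≤ M) :
    ∑ j ∈ range k, c j * (S (j + 1) - S j) ≤ c k * S k + (1 - c k) * M := by
  induction k with
  | zero =>
    have hM : 0 ≤ M := hS0 ▸ hSM 0 le_rfl
    simp only [range_zero, sum_empty, hS0, mul_zero, zero_add]
    exact mul_nonneg (by linarith) hM
  | succ k ih =>
    have hk := ih fun i hi => hSM i (hi.trans k.le_succ)
    have hSk : S (k + 1) ≤ M := hSM (k + 1) le_rfl
    have hck : c (k + 1) ≤ c k := hc k.le_succ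
    rw [sum_range_succ]
    nlinarith

theorem sum_range_mul_sub_le_of_antitone (hc : Antitone c) (hc_nonneg : ∀ k, 0 ≤ c k)
    (hc0 : c 0 ≤ 1) (hS0 : S 0 = 0) {k : ℕ} (hSM : ∀ i ≤ k, S i ≤ M) :
    ∑ j ∈ range k, c j * (S (j + 1) - S j) ≤ M := by
  have h := sum_range_mul_sub_le_mul_add_one_sub_mul hc hc0 hS0 k hSM
  have hSk := hSM k le_rfl
  nlinarith [hc_nonneg k]

end DiscountedSums

theorem sum_Icc_one_mul_pred_eq_sum_range (f g : ℕ → ℝ) (k : ℕ) :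
    ∑ j ∈ Icc 1 k, f (j - 1) * g j = ∑ j ∈ range k, f j * g (j + 1) := by
  induction k with
  | zero => simp
  | succ k ih =>
    rw [sum_Icc_succ_top (Nat.le_add_left 1 k), ih, sum_range_succ, Nat.add_sub_cancel]

section DiscountRatio

variable {α r : ℕ → ℝ}

theorem prod_Icc_one_div_nonneg (hr : ∀ j, 1 ≤ j → 0 ≤ r j) (hαr : ∀ j, 1 ≤ j → r j ≤ α j)
    (k : ℕ) : 0 ≤ ∏ j ∈ Icc 1 k, (1 + r j) / (1 + α j) :=
  prod_nonneg fun j hj => by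
    have hrj := hr j (mem_Icc.1 hj).1
    have hαrj := hαr j (mem_Icc.1 hj).1
    exact div_nonneg (by linarith) (by linarith)

theorem antitone_prod_Icc_one_div (hr : ∀ j, 1 ≤ j → 0 ≤ r j)
    (hαr : ∀ j, 1 ≤ j → r j ≤ α j) :
    Antitone fun k => ∏ j ∈ Icc 1 k, (1 + r j) / (1 + α j) := by
  refine antitone_nat_of_succ_le fun k => ?_
  have hr' := hr (k + 1) (Nat.le_add_left 1 k)
  have hαr' := hαr (k + 1) (Nat.le_add_left 1 k)
  have hq : (1 + r (k + 1)) / (1 + α (k + 1)) ≤ 1 := by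
    rw [div_le_one (by linarith)]
    linarith
  rw [prod_Icc_succ_top (Nat.le_add_left 1 k)]
  exact mul_le_of_le_one_right (prod_Icc_one_div_nonneg hr hαr k) hq

theorem prod_Icc_one_inv_eq_mul (hr : ∀ j, 1 ≤ j → 0 ≤ r j) (k : ℕ) :
    ∏ j ∈ Icc 1 k, (1 + α j)⁻¹ =
      (∏ j ∈ Icc 1 k, (1 + r j) / (1 + α j)) * ∏ j ∈ Icc 1 k, (1 + r j)⁻¹ := by
  rw [← prod_mul_distrib]
  refine prod_congr rfl fun j hj => ?_
  have : 1 + r j ≠ 0 := by linarith [hr j (mem_Icc.1 hj).1]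
  field_simp

end DiscountRatio

/-- Lemma 2: comparison of discounted maxima, deterministic form.
Sequences are 1-indexed: `v k = ∏_{j=1}^{k} 1/(1+r_j)`, `v* k = ∏_{j=1}^{k} 1/(1+α_j)`
(so `v 0 = v* 0 = 1`), `S** k = ∑_{j=1}^{k} v*_{j-1} y_j`, `S* k = ∑_{j=1}^{k} v_{j-1} y_j`
(so `S** 0 = S* 0 = 0`).  If `α_j ≥ r_j ≥ 0` for all `j ≥ 1`, then for every `n ≥ 0`,
`max_{0 ≤ k ≤ n} S**_k ≤ max_{0 ≤ k ≤ n} S*_k`. -/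
theorem stmt9 (α r y : ℕ → ℝ)
    (hr : ∀ j : ℕ, 1 ≤ j → 0 ≤ r j)
    (hαr : ∀ j : ℕ, 1 ≤ j → r j ≤ α j)
    (v vstar : ℕ → ℝ)
    (hv : ∀ k, v k = ∏ j ∈ Finset.Icc 1 k, (1 + r j)⁻¹)
    (hvstar : ∀ k, vstar k = ∏ j ∈ Finset.Icc 1 k, (1 + α j)⁻¹)
    (Sss Ss : ℕ → ℝ)
    (hSss : ∀ k, Sss k = ∑ j ∈ Finset.Icc 1 k, vstar (j - 1) * y j)
    (hSs : ∀ k, Ss k = ∑ j ∈ Finset.Icc 1 k, v (j - 1) * y j) :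
    ∀ n : ℕ, (Finset.range (n + 1)).sup' ⟨0, by simp⟩ Sss ≤
      (Finset.range (n + 1)).sup' ⟨0, by simp⟩ Ss := by
  intro n
  set w : ℕ → ℝ := fun k => ∏ j ∈ Icc 1 k, (1 + r j) / (1 + α j)
  have hSs_succ (j : ℕ) : Ss (j + 1) - Ss j = v j * y (j + 1) := by
    simp only [hSs, sum_Icc_one_mul_pred_eq_sum_range, sum_range_succ, add_sub_cancel_left]
  have hSss_eq (k : ℕ) : Sss k = ∑ j ∈ range k, w j * (Ss (j + 1) - Ss j) := by
    rw [hSss, sum_Icc_one_mul_pred_eq_sum_range]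
    refine sum_congr rfl fun j _ => ?_
    rw [hSs_succ, hvstar, hv, prod_Icc_one_inv_eq_mul hr, mul_assoc]
  refine sup'_le _ _ fun k hk => ?_
  rw [hSss_eq]
  refine sum_range_mul_sub_le_of_antitone (antitone_prod_Icc_one_div hr hαr)
    (prod_Icc_one_div_nonneg hr hαr) (by simp) (by simp [hSs]) fun i hi => ?_
  exact le_sup' Ss (mem_range.2 (by have := mem_range.1 hk; omega))
end

section
/- Let (Ω, F, P) be a probability space, u > 0, (r_k)_{k≥1} nonnegative real constants, and (R_k)_{k≥0}, (Y_k)_{k≥1}, (α_k)_{k≥1} real-valued random variables such that almost surely R_0 = u, α_k ≥ r_k and R_k ≥ (1 + α_k) R_{k−1} − Y_k for all k ≥ 1. Set v_k = ∏_{j=1}^{k} 1/(1 + r_j) (v_0 = 1), Y_k^* = Y_k/(1 + α_k), S_k^* = Σ_{j=1}^{k} v_{j−1} Y_j^*, and assume Y_1^*, Y_2^*, … are mutually independent. Then for every h ≥ 0: P[∃ k ≥ 0, R_k < 0] ≤ e^{−hu} · sup_{k≥1} E[e^{h S_k^*}] = e^{−hu} · sup_{k≥1} ∏_{j=1}^{k}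 E[e^{h v_{j−1} Y_j^*}]. -/
/-!
Discounting by `v` turns the surplus recursion into `v k * R k ≥ u - S*_k` for as long as
`S*_j ≤ u` for all `j ≤ k` (this uses `α_k ≥ r_k` and the nonnegativity of the surplus), so ruin
forces `S*_k > u` for some `k ≥ 1`.

For partial sums `S_k` of independent variables, decompose `{∃ k, S_k ≥ u}` by the first time `k`
at which `u` is reached. On that event `e^{h u} ≤ e^{h S_k}`, and the event and `S_k` are
independent of the increment `S_n - S_k`, so
`e^{h u} P(first passage at k) E[e^{h S_n}] ≤ E[e^{h S_k}] E[e^{h S_n}; first passage at k]`.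
Summing over `k ≤ n` and cancelling `E[e^{h S_n}]` bounds `e^{h u} P(S_k ≥ u for some k ≤ n)`
by `sup_k E[e^{h S_k}]`.
-/

open MeasureTheory ProbabilityTheory Finset
open scoped ENNReal

@[to_additive sum_Icc_one_eq_sum_range]
lemma prod_Icc_one_eq_prod_range {M : Type*} [CommMonoid M] (f : ℕ → M) (n : ℕ) :
    ∏ j ∈ Icc 1 n, f j = ∏ j ∈ range n, f (j + 1) := by
  rw [← Ico_add_one_right_eq_Icc, prod_Ico_eq_prod_range, Nat.add_sub_cancel]
  simp only [add_comm]

lemma discounted_surplus_step {a r v c R R' Y : ℝ} (hr : 0 ≤ r) (hra : r ≤ a) (hv : 0 < v)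
    (hR : c ≤ v * R) (hstep : (1 + a) * R - Y ≤ R') (hc : 0 ≤ c - v * (Y / (1 + a))) :
    c - v * (Y / (1 + a)) ≤ v * (1 + r)⁻¹ * R' := by
  have ha : 0 < 1 + a := by linarith
  have hR' : R - Y / (1 + a) ≤ (1 + a)⁻¹ * R' := by
    rw [← div_eq_inv_mul, le_div_iff₀ ha, sub_mul, div_mul_cancel₀ _ ha.ne']
    linarith
  have hdisc : c - v * (Y / (1 + a)) ≤ v * (1 + a)⁻¹ * R' :=
    calc c - v * (Y / (1 + a)) ≤ v * (R - Y / (1 + a)) := by linarith [mul_sub v R (Y / (1 + a))]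
      _ ≤ v * ((1 + a)⁻¹ * R') := by gcongr
      _ = v * (1 + a)⁻¹ * R' := (mul_assoc _ _ _).symm
  have hR'_nonneg : 0 ≤ R' := (mul_nonneg_iff_of_pos_left (by positivity)).mp (hc.trans hdisc)
  exact hdisc.trans (by gcongr)

theorem exists_lt_sum_discounted_of_neg {u : ℝ} (hu : 0 ≤ u) {r a R Y v : ℕ → ℝ}
    (hr : ∀ k, 1 ≤ k → 0 ≤ r k) (hv : ∀ k, v k = ∏ j ∈ Icc 1 k, (1 + r j)⁻¹) (hR0 : R 0 = u)
    (hR : ∀ k, 1 ≤ k → r k ≤ a k ∧ (1 + a k) * R (k - 1) - Y k ≤ R k) {k : ℕ} (hk : R k < 0) :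
    ∃ n, u < ∑ j ∈ range (n + 1), v j * (Y (j + 1) / (1 + a (j + 1))) := by
  by_contra! hT
  set T : ℕ → ℝ := fun n => ∑ j ∈ range n, v j * (Y (j + 1) / (1 + a (j + 1)))
  have hTu : ∀ n, T n ≤ u := fun n => by
    rcases n with _ | n
    · simpa [T] using hu
    · exact hT n
  have hv_pos : ∀ k, 0 < v k := fun k => by
    rw [hv]
    exact prod_pos fun j hj => by have := hr j (mem_Icc.mp hj).1; positivity
  have hv_succ : ∀ k, v (k + 1) = v k * (1 + r (k + 1))⁻¹ := fun k => by
    rw [hv, hv, prod_Icc_succ_top (Nat.le_add_left 1 k)]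
  have hsurplus : ∀ n, u - T n ≤ v n * R n := fun n => by
    induction n with
    | zero => simp [T, hv, hR0]
    | succ n ih =>
      obtain ⟨hra, hstep⟩ := hR (n + 1) n.succ_pos
      have hTu' := hTu (n + 1)
      simp only [T, sum_range_succ] at hTu' ⊢
      rw [hv_succ, ← sub_sub]
      exact discounted_surplus_step (hr _ n.succ_pos) hra (hv_pos n) ih (by simpa using hstep)
        (by linarith)
  have hdisc_nonneg := (sub_nonneg.mpr (hTu k)).trans (hsurplus k)
  exact hk.not_ge ((mul_nonneg_iff_of_pos_left (hv_pos k)).mp hdisc_nonneg)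

section Independent

variable {Ω : Type*} {X : ℕ → Ω → ℝ}

lemma measurable_sum_iSup_comap {S : Set ℕ} {s : Finset ℕ} (hs : ↑s ⊆ S) :
    Measurable[⨆ j ∈ S, MeasurableSpace.comap (X j) inferInstance] fun ω => ∑ j ∈ s, X j ω :=
  Finset.measurable_sum s fun j hj =>
    (comap_measurable (X j)).mono
      (le_biSup (fun j => MeasurableSpace.comap (X j) inferInstance) (hs hj)) le_rfl

variable [MeasurableSpace Ω] {μ : Measure Ω}

lemma biSup_comap_le (hXm : ∀ j, Measurable (X j)) (S : Set ℕ) :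
    ⨆ j ∈ S, MeasurableSpace.comap (X j) inferInstance ≤ ‹MeasurableSpace Ω› :=
  iSup₂_le fun j _ => (hXm j).comap_le

theorem setLIntegral_exp_sum_range_eq_mul (hXm : ∀ j, Measurable (X j)) (hXi : iIndepFun X μ)
    (h : ℝ) {m n : ℕ} (hmn : m ≤ n) {A : Set Ω}
    (hA : MeasurableSet[⨆ j ∈ Set.Iio m, MeasurableSpace.comap (X j) inferInstance] A) :
    ∫⁻ ω in A, ENNReal.ofReal (Real.exp (h * ∑ j ∈ range n, X j ω)) ∂μ =
      (∫⁻ ω in A, ENNReal.ofReal (Real.exp (h * ∑ j ∈ range m, X j ω)) ∂μ) *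
        ∫⁻ ω, ENNReal.ofReal (Real.exp (h * ∑ j ∈ Ico m n, X j ω)) ∂μ := by
  have hA' : MeasurableSet A := biSup_comap_le hXm _ _ hA
  have hsplit : ∀ ω,
      A.indicator (fun ω => ENNReal.ofReal (Real.exp (h * ∑ j ∈ range n, X j ω))) ω =
        A.indicator (fun ω => ENNReal.ofReal (Real.exp (h * ∑ j ∈ range m, X j ω))) ω *
          ENNReal.ofReal (Real.exp (h * ∑ j ∈ Ico m n, X j ω)) := by
    intro ω
    by_cases hω : ω ∈ A
    · simp only [Set.indicator_of_mem hω]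
      rw [← sum_range_add_sum_Ico _ hmn, mul_add, Real.exp_add,
        ENNReal.ofReal_mul (Real.exp_nonneg _)]
    · simp only [Set.indicator_of_notMem hω, zero_mul]
  rw [← lintegral_indicator hA', lintegral_congr hsplit,
    lintegral_mul_eq_lintegral_mul_lintegral_of_independent_measurableSpace
      (biSup_comap_le hXm _) (biSup_comap_le hXm _)
      (indep_iSup_of_disjoint (fun j => (hXm j).comap_le)
        ((iIndepFun_iff_iIndep _ X μ).mp hXi) (Set.Iio_disjoint_Ici le_rfl)),
    lintegral_indicator hA']
  · exact ((measurable_sum_iSup_comap (coe_range m).le).const_mul h).exp.ennreal_ofReal.indicator hA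
  · exact ((measurable_sum_iSup_comap
      ((coe_Ico m n).trans_subset Set.Ico_subset_Ici_self)).const_mul h).exp.ennreal_ofReal

theorem lintegral_exp_sum_range_eq_prod [IsProbabilityMeasure μ] (hXm : ∀ j, Measurable (X j))
    (hXi : iIndepFun X μ) (h : ℝ) (n : ℕ) :
    ∫⁻ ω, ENNReal.ofReal (Real.exp (h * ∑ j ∈ range n, X j ω)) ∂μ =
      ∏ j ∈ range n, ∫⁻ ω, ENNReal.ofReal (Real.exp (h * X j ω)) ∂μ := by
  induction n with
  | zero => simp
  | succ n ih =>
    have hsplit := setLIntegral_exp_sum_range_eq_mul (μ := μ) hXm hXi h n.le_succ MeasurableSet.univ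
    simp only [Measure.restrict_univ, Nat.Ico_succ_singleton, sum_singleton] at hsplit
    rw [hsplit, prod_range_succ, ih]

theorem ofReal_exp_mul_measure_mul_le (hXm : ∀ j, Measurable (X j)) (hXi : iIndepFun X μ)
    {h u : ℝ} (hh : 0 ≤ h) {m n : ℕ} (hmn : m ≤ n) {A : Set Ω}
    (hA : MeasurableSet[⨆ j ∈ Set.Iio m, MeasurableSpace.comap (X j) inferInstance] A)
    (hAu : ∀ ω ∈ A, u ≤ ∑ j ∈ range m, X j ω) :
    ENNReal.ofReal (Real.exp (h * u)) * μ A *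
        ∫⁻ ω, ENNReal.ofReal (Real.exp (h * ∑ j ∈ range n, X j ω)) ∂μ ≤
      (∫⁻ ω, ENNReal.ofReal (Real.exp (h * ∑ j ∈ range m, X j ω)) ∂μ) *
        ∫⁻ ω in A, ENNReal.ofReal (Real.exp (h * ∑ j ∈ range n, X j ω)) ∂μ := by
  have hsplit_univ := setLIntegral_exp_sum_range_eq_mul (μ := μ) hXm hXi h hmn MeasurableSet.univ
  rw [Measure.restrict_univ] at hsplit_univ
  have hchernoff : ENNReal.ofReal (Real.exp (h * u)) * μ A ≤
      ∫⁻ ω in A, ENNReal.ofReal (Real.exp (h * ∑ j ∈ range m, X j ω)) ∂μ := by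
    rw [← setLIntegral_const]
    exact setLIntegral_mono
      ((Finset.measurable_sum _ fun j _ => hXm j).const_mul h).exp.ennreal_ofReal
      fun ω hω => ENNReal.ofReal_le_ofReal <| Real.exp_le_exp.mpr <|
        mul_le_mul_of_nonneg_left (hAu ω hω) hh
  rw [hsplit_univ, setLIntegral_exp_sum_range_eq_mul hXm hXi h hmn hA]
  calc _ = (∫⁻ ω, ENNReal.ofReal (Real.exp (h * ∑ j ∈ range m, X j ω)) ∂μ) *
        (ENNReal.ofReal (Real.exp (h * u)) * μ A *
          ∫⁻ ω, ENNReal.ofReal (Real.exp (h * ∑ j ∈ Ico m n, X j ω)) ∂μ) := by ring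
    _ ≤ _ := by gcongr

theorem ofReal_exp_mul_sum_measure_le [NeZero μ] (hXm : ∀ j, Measurable (X j))
    (hXi : iIndepFun X μ) {h u : ℝ} (hh : 0 ≤ h) {A : ℕ → Set Ω}
    (hAd : Pairwise (Function.onFun Disjoint A))
    (hA : ∀ k, MeasurableSet[⨆ j ∈ Set.Iio (k + 1), MeasurableSpace.comap (X j) inferInstance]
      (A k))
    (hAu : ∀ k, ∀ ω ∈ A k, u ≤ ∑ j ∈ range (k + 1), X j ω) (n : ℕ) :
    ENNReal.ofReal (Real.exp (h * u)) * ∑ k ∈ range n, μ (A k) ≤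
      ⨆ k, ∫⁻ ω, ENNReal.ofReal (Real.exp (h * ∑ j ∈ range (k + 1), X j ω)) ∂μ := by
  set E : ℕ → Ω → ℝ≥0∞ := fun n ω => ENNReal.ofReal (Real.exp (h * ∑ j ∈ range n, X j ω))
  set C := ⨆ k, ∫⁻ ω, E (k + 1) ω ∂μ
  rcases n with _ | n
  · simp
  by_cases hC : C = ⊤
  · exact hC ▸ le_top
  have hE_ne_top : ∫⁻ ω, E (n + 1) ω ∂μ ≠ ⊤ :=
    ne_top_of_le_ne_top hC (le_iSup (fun k => ∫⁻ ω, E (k + 1) ω ∂μ) n)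
  have hE_ne_zero : ∫⁻ ω, E (n + 1) ω ∂μ ≠ 0 := by
    refine ((lintegral_pos_iff_support ((Finset.measurable_sum _ fun j _ => hXm j).const_mul
      h).exp.ennreal_ofReal).2 ?_).ne'
    simp [Function.support, Real.exp_pos, NeZero.ne μ]
  refine (ENNReal.mul_le_mul_iff_left hE_ne_zero hE_ne_top).mp ?_
  calc (ENNReal.ofReal (Real.exp (h * u)) * ∑ k ∈ range (n + 1), μ (A k)) *
        ∫⁻ ω, E (n + 1) ω ∂μ
      = ∑ k ∈ range (n + 1),
          ENNReal.ofReal (Real.exp (h * u)) * μ (A k) * ∫⁻ ω, E (n + 1) ω ∂μ := by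
        rw [mul_sum, sum_mul]
    _ ≤ ∑ k ∈ range (n + 1), C * ∫⁻ ω in A k, E (n + 1) ω ∂μ := by
        refine sum_le_sum fun k hk => ?_
        have hkn : k + 1 ≤ n + 1 := by simpa using hk
        exact (ofReal_exp_mul_measure_mul_le hXm hXi hh hkn (hA k) (hAu k)).trans
          (by gcongr; exact le_iSup (fun k => ∫⁻ ω, E (k + 1) ω ∂μ) k)
    _ = C * ∫⁻ ω in ⋃ k ∈ range (n + 1), A k, E (n + 1) ω ∂μ := by
        rw [lintegral_biUnion_finset (hAd.set_pairwise _) fun k _ => biSup_comap_le hXm _ _ (hA k),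
          mul_sum]
    _ ≤ C * ∫⁻ ω, E (n + 1) ω ∂μ := by gcongr; exact Measure.restrict_le_self

theorem measure_exists_le_sum_range_le [NeZero μ] (hXm : ∀ j, Measurable (X j))
    (hXi : iIndepFun X μ) (u : ℝ) {h : ℝ} (hh : 0 ≤ h) :
    μ {ω | ∃ n, u ≤ ∑ j ∈ range (n + 1), X j ω} ≤
      ENNReal.ofReal (Real.exp (-h * u)) *
        ⨆ n, ∫⁻ ω, ENNReal.ofReal (Real.exp (h * ∑ j ∈ range (n + 1), X j ω)) ∂μ := by
  set B : ℕ → Set Ω := fun n => {ω | u ≤ ∑ j ∈ range (n + 1), X j ω}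
  have hB : ∀ k, ∀ i ≤ k,
      MeasurableSet[⨆ j ∈ Set.Iio (k + 1), MeasurableSpace.comap (X j) inferInstance] (B i) :=
    fun k i hik => measurableSet_le measurable_const <| measurable_sum_iSup_comap <|
      (coe_range _).trans_subset (Set.Iio_subset_Iio (by omega))
  have hA : ∀ k,
      MeasurableSet[⨆ j ∈ Set.Iio (k + 1), MeasurableSpace.comap (X j) inferInstance]
        (disjointed B k) := by
    intro k
    rw [disjointed_eq_inter_compl]
    exact (hB k k le_rfl).inter <| MeasurableSet.iInter fun i => MeasurableSet.iInter fun hi =>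
      (hB k i hi.le).compl
  have hexp : ENNReal.ofReal (Real.exp (-h * u)) * ENNReal.ofReal (Real.exp (h * u)) = 1 := by
    rw [← ENNReal.ofReal_mul (Real.exp_nonneg _), ← Real.exp_add, neg_mul, neg_add_cancel,
      Real.exp_zero, ENNReal.ofReal_one]
  calc μ {ω | ∃ n, u ≤ ∑ j ∈ range (n + 1), X j ω} = μ (⋃ k, disjointed B k) := by
        rw [iUnion_disjointed, Set.ofPred_exists]
    _ = ∑' k, μ (disjointed B k) :=
        measure_iUnion (disjoint_disjointed B) fun k => biSup_comap_le hXm _ _ (hA k)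
    _ ≤ _ := ENNReal.tsum_le_of_sum_range_le fun n => by
        rw [← one_mul (∑ k ∈ range n, _), ← hexp, mul_assoc]
        exact mul_le_mul_right (ofReal_exp_mul_sum_measure_le hXm hXi hh (disjoint_disjointed B)
          hA (fun k ω hω => disjointed_subset B k hω) n) _

end Independent

/-- Theorem 2.
Sequences of random variables are 1-indexed (index `0` plays the role of time `0`):
almost surely `R 0 = u`, `α_k ≥ r_k` and `R_k ≥ (1+α_k) R_{k-1} − Y_k` for all `k ≥ 1`.
With `v k = ∏_{j=1}^{k} 1/(1+r_j)` (so `v 0 = 1`), `Y*_k = Y_k/(1+α_k)`,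
`S*_k = ∑_{j=1}^{k} v_{j-1} Y*_j`, and `Y*_1, Y*_2, …` mutually independent,
for every `h ≥ 0`:
`P[∃ k ≥ 0, R_k < 0] ≤ e^{-h u} · sup_{k≥1} E[e^{h S*_k}]
 = e^{-h u} · sup_{k≥1} ∏_{j=1}^{k} E[e^{h v_{j-1} Y*_j}]`. -/
theorem stmt10 {Ω : Type*} [MeasurableSpace Ω] (P : Measure Ω) [IsProbabilityMeasure P]
    (u : ℝ) (hu : 0 < u)
    (r : ℕ → ℝ) (hr : ∀ k : ℕ, 1 ≤ k → 0 ≤ r k)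
    (R Y α : ℕ → Ω → ℝ)
    (hae : ∀ᵐ ω ∂P, R 0 ω = u ∧
      ∀ k : ℕ, 1 ≤ k → r k ≤ α k ω ∧ (1 + α k ω) * R (k - 1) ω - Y k ω ≤ R k ω)
    (v : ℕ → ℝ) (hv : ∀ k, v k = ∏ j ∈ Finset.Icc 1 k, (1 + r j)⁻¹)
    (Ystar : ℕ → Ω → ℝ) (hYstar : ∀ k ω, Ystar k ω = Y k ω / (1 + α k ω))
    (Sstar : ℕ → Ω → ℝ)
    (hSstar : ∀ k ω, Sstar k ω = ∑ j ∈ Finset.Icc 1 k, v (j - 1) * Ystar j ω)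
    (hmeas : ∀ k, Measurable (Ystar k))
    (hindep : iIndepFun (fun k : ℕ => Ystar (k + 1)) P)
    (h : ℝ) (hh : 0 ≤ h) :
    P {ω | ∃ k : ℕ, R k ω < 0} ≤
      ENNReal.ofReal (Real.exp (-h * u)) *
        ⨆ k : ℕ, ∫⁻ ω, ENNReal.ofReal (Real.exp (h * Sstar (k + 1) ω)) ∂P ∧
    (⨆ k : ℕ, ∫⁻ ω, ENNReal.ofReal (Real.exp (h * Sstar (k + 1) ω)) ∂P) =
      ⨆ k : ℕ, ∏ j ∈ Finset.Icc 1 (k + 1),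
        ∫⁻ ω, ENNReal.ofReal (Real.exp (h * (v (j - 1) * Ystar j ω))) ∂P := by
  set X : ℕ → Ω → ℝ := fun j ω => v j * Ystar (j + 1) ω
  have hXm : ∀ j, Measurable (X j) := fun j => (hmeas (j + 1)).const_mul (v j)
  have hXi : iIndepFun X P := hindep.comp (fun j x => v j * x) fun j => measurable_const_mul (v j)
  have hS : ∀ n ω, Sstar n ω = ∑ j ∈ range n, X j ω := fun n ω => by
    rw [hSstar, sum_Icc_one_eq_sum_range]
    simp [X]
  simp only [hS]
  refine ⟨?_, ?_⟩
  · calc P {ω | ∃ k, R k ω < 0} ≤ P {ω | ∃ n, u ≤ ∑ j ∈ range (n + 1), X j ω} := by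
          refine measure_mono_ae ?_
          filter_upwards [hae] with ω ⟨hR0, hR⟩ ⟨k, hk⟩
          obtain ⟨n, hn⟩ := exists_lt_sum_discounted_of_neg (R := (R · ω)) hu.le hr hv hR0 hR hk
          exact ⟨n, by simpa [X, hYstar] using hn.le⟩
      _ ≤ _ := measure_exists_le_sum_range_le hXm hXi u hh
  · congr 1 with k
    rw [lintegral_exp_sum_range_eq_prod hXm hXi, prod_Icc_one_eq_prod_range]
    simp [X]
end

section
/- Let X_1, X_2, … be mutually independent real-valued random variables with partial sums S_k^* = X_1 + ⋯ + X_k (S_0^* = 0). Suppose there exist integers l, m ≥ 1 and a real number L^* ≥ 0 such that E[e^{L^*(S_{n+l}^* − S_n^*)}] ≤ 1 for every n ≥ m. Then for every h ∈ [0, L^*]: sup_{k≥1} E[e^{h S_k^*}] = max_{1≤k≤l+m−1} E[e^{h S_k^*}], and for every u > 0: P[sup_{k≥1} S_k^* > u] ≤ e^{−hu} · max_{1≤k≤l+m−1} E[e^{h S_k^*}]. -/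
/-!
Write `A k = E[e^{h S_k}]`. By independence of the increments, `A p = A n · E[e^{h (S_p - S_n)}]`
for `n ≤ p`, and by convexity of `h ↦ e^{h y}` the increment factor over `l` steps from any
`n ≥ m` is at most `1` whenever it is at `h = L*`. Hence `A (n + l) ≤ A n` for `n ≥ m`, and every
`A k` with `k ≥ 1` is dominated by one of `A 1, …, A (l + m - 1)`.

The tail bound is Doob's maximal inequality in disguise: cut `{sup_k S_k > u}` according to the
first index `k` with `S_k > u`; on that piece `e^{h u} ≤ e^{h S_k}`, and the factorisation turns
`A N · E[e^{h S_k}; piece]` into `A k · E[e^{h S_N}; piece]`, so summing over `k < N` and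
dividing by `A N` bounds the probability by `e^{-h u} · sup_k A k`.
-/

open MeasureTheory ProbabilityTheory Finset Function
open scoped ENNReal

section Supremum

variable {α : Type*} [CompleteLattice α] {a : ℕ → α} {l m : ℕ}

lemma le_biSup_Icc_of_add_le (hl : 1 ≤ l) (hm : 1 ≤ m) (hstep : ∀ n, m ≤ n → a (n + l) ≤ a n)
    {k : ℕ} (hk : 1 ≤ k) : a k ≤ ⨆ j ∈ Icc 1 (l + m - 1), a j := by
  induction k using Nat.strong_induction_on with
  | _ k ih =>
    by_cases hkle : k ≤ l + m - 1
    · exact le_biSup a (mem_Icc.2 ⟨hk, hkle⟩)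
    · obtain ⟨n, rfl⟩ : ∃ n, k = n + l := ⟨k - l, by omega⟩
      exact (hstep n (by omega)).trans (ih n (by omega) (by omega))

lemma iSup_add_one_eq_biSup_Icc_of_add_le (hl : 1 ≤ l) (hm : 1 ≤ m)
    (hstep : ∀ n, m ≤ n → a (n + l) ≤ a n) :
    ⨆ k, a (k + 1) = ⨆ j ∈ Icc 1 (l + m - 1), a j :=
  le_antisymm (iSup_le fun k => le_biSup_Icc_of_add_le hl hm hstep (Nat.le_add_left 1 k))
    (iSup₂_le fun j hj => le_iSup_of_le (j - 1) <| by
      rw [Nat.sub_add_cancel (mem_Icc.1 hj).1])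

end Supremum

section PartialSums

variable {Ω : Type*}

def partialSum (X : ℕ → Ω → ℝ) (k : ℕ) (ω : Ω) : ℝ := ∑ j ∈ range k, X j ω

lemma partialSum_sub_eq_sum_Ico {X : ℕ → Ω → ℝ} {n p : ℕ} (hnp : n ≤ p) (ω : Ω) :
    partialSum X p ω - partialSum X n ω = ∑ j ∈ Ico n p, X j ω :=
  (sum_Ico_eq_sub _ hnp).symm

abbrev pastSigma (X : ℕ → Ω → ℝ) (n : ℕ) : MeasurableSpace Ω :=
  ⨆ i ∈ Set.Iio n, MeasurableSpace.comap (X i) inferInstance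

abbrev futureSigma (X : ℕ → Ω → ℝ) (n : ℕ) : MeasurableSpace Ω :=
  ⨆ i ∈ Set.Ici n, MeasurableSpace.comap (X i) inferInstance

section Sigma

variable {X : ℕ → Ω → ℝ} {n p : ℕ}

lemma measurable_partialSum_pastSigma {k : ℕ} (hkn : k ≤ n) :
    Measurable[pastSigma X n] (partialSum X k) :=
  Finset.measurable_sum _ fun j hj => Measurable.of_comap_le <|
    le_iSup₂ (f := fun i (_ : i ∈ Set.Iio n) => MeasurableSpace.comap (X i) inferInstance) j
      (by simp only [mem_range] at hj; exact Set.mem_Iio.2 (by omega))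

lemma measurable_partialSum_sub_futureSigma (hnp : n ≤ p) :
    Measurable[futureSigma X n] (partialSum X p - partialSum X n) := by
  rw [show partialSum X p - partialSum X n = fun ω => ∑ j ∈ Ico n p, X j ω from
    funext (partialSum_sub_eq_sum_Ico hnp)]
  exact Finset.measurable_sum _ fun j hj => Measurable.of_comap_le <|
    le_iSup₂ (f := fun i (_ : i ∈ Set.Ici n) => MeasurableSpace.comap (X i) inferInstance) j
      (Set.mem_Ici.2 (mem_Ico.1 hj).1)

end Sigma

variable [MeasurableSpace Ω]

noncomputable def expMoment (Y : Ω → ℝ) (P : Measure Ω) (t : ℝ) : ℝ≥0∞ :=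
  ∫⁻ ω, ENNReal.ofReal (Real.exp (t * Y ω)) ∂P

section Independence

variable {X : ℕ → Ω → ℝ} {n p : ℕ}

lemma pastSigma_le (hmeas : ∀ i, Measurable (X i)) : pastSigma X n ≤ ‹MeasurableSpace Ω› :=
  iSup₂_le fun i _ => (hmeas i).comap_le

lemma futureSigma_le (hmeas : ∀ i, Measurable (X i)) : futureSigma X n ≤ ‹MeasurableSpace Ω› :=
  iSup₂_le fun i _ => (hmeas i).comap_le

variable {P : Measure Ω}

lemma indep_pastSigma_futureSigma (hmeas : ∀ i, Measurable (X i)) (hindep : iIndepFun X P) :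
    Indep (pastSigma X n) (futureSigma X n) P :=
  indep_iSup_of_disjoint (fun i => (hmeas i).comap_le) ((iIndepFun_iff_iIndep _ _ _).1 hindep)
    (Set.Iio_disjoint_Ici le_rfl)

lemma setLIntegral_exp_partialSum_eq_mul (hmeas : ∀ i, Measurable (X i))
    (hindep : iIndepFun X P) {B : Set Ω} (hB : MeasurableSet[pastSigma X n] B) (hnp : n ≤ p)
    (t : ℝ) :
    ∫⁻ ω in B, ENNReal.ofReal (Real.exp (t * partialSum X p ω)) ∂P =
      (∫⁻ ω in B, ENNReal.ofReal (Real.exp (t * partialSum X n ω)) ∂P) *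
        expMoment (partialSum X p - partialSum X n) P t := by
  have hexp {m : MeasurableSpace Ω} {Y : Ω → ℝ} (hY : Measurable[m] Y) :
      Measurable[m] fun ω => ENNReal.ofReal (Real.exp (t * Y ω)) :=
    ENNReal.measurable_ofReal.comp (Real.measurable_exp.comp (hY.const_mul t))
  rw [← lintegral_indicator (pastSigma_le hmeas _ hB),
    ← lintegral_indicator (pastSigma_le hmeas _ hB), expMoment,
    ← lintegral_mul_eq_lintegral_mul_lintegral_of_independent_measurableSpace
      (pastSigma_le hmeas) (futureSigma_le hmeas) (indep_pastSigma_futureSigma hmeas hindep)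
      ((hexp (measurable_partialSum_pastSigma le_rfl)).indicator hB)
      (hexp (measurable_partialSum_sub_futureSigma hnp))]
  refine lintegral_congr fun ω => ?_
  by_cases hω : ω ∈ B
  · simp only [Set.indicator_of_mem hω, Pi.sub_apply, ← ENNReal.ofReal_mul (Real.exp_nonneg _),
      ← Real.exp_add]
    congr 2; ring
  · simp [hω]

lemma expMoment_partialSum_eq_mul (hmeas : ∀ i, Measurable (X i)) (hindep : iIndepFun X P)
    (hnp : n ≤ p) (t : ℝ) :
    expMoment (partialSum X p) P t =
      expMoment (partialSum X n) P t * expMoment (partialSum X p - partialSum X n) P t := by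
  simpa only [Measure.restrict_univ, expMoment] using
    setLIntegral_exp_partialSum_eq_mul hmeas hindep MeasurableSet.univ hnp t

lemma expMoment_mul_setLIntegral_exp_partialSum_comm (hmeas : ∀ i, Measurable (X i))
    (hindep : iIndepFun X P) {B : Set Ω} (hB : MeasurableSet[pastSigma X n] B) (hnp : n ≤ p)
    (t : ℝ) :
    expMoment (partialSum X p) P t *
        ∫⁻ ω in B, ENNReal.ofReal (Real.exp (t * partialSum X n ω)) ∂P =
      expMoment (partialSum X n) P t *
        ∫⁻ ω in B, ENNReal.ofReal (Real.exp (t * partialSum X p ω)) ∂P := by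
  rw [expMoment_partialSum_eq_mul hmeas hindep hnp,
    setLIntegral_exp_partialSum_eq_mul hmeas hindep hB hnp]
  ring

end Independence

lemma expMoment_ne_zero {P : Measure Ω} [NeZero P] {Y : Ω → ℝ} (hY : AEMeasurable Y P) (t : ℝ) :
    expMoment Y P t ≠ 0 := by
  rw [expMoment, ne_eq, lintegral_eq_zero_iff' (by fun_prop)]
  intro h0
  obtain ⟨ω, hω⟩ := h0.exists
  exact (ENNReal.ofReal_pos.2 (Real.exp_pos _)).ne' hω

lemma expMoment_le_one_of_le {P : Measure Ω} [IsProbabilityMeasure P] {Y : Ω → ℝ} {h L : ℝ}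
    (hh : 0 ≤ h) (hhL : h ≤ L) (hL : expMoment Y P L ≤ 1) : expMoment Y P h ≤ 1 := by
  obtain ⟨θ, hθ0, hθ1, rfl⟩ : ∃ θ : ℝ, 0 ≤ θ ∧ θ ≤ 1 ∧ h = θ * L :=
    ⟨h / L, div_nonneg hh (hh.trans hhL), div_le_one_of_le₀ hhL (hh.trans hhL),
      (div_mul_cancel_of_imp fun hL0 => by linarith).symm⟩
  have hconv (y : ℝ) : Real.exp (θ * L * y) ≤ θ * Real.exp (L * y) + (1 - θ) := by
    simpa [smul_eq_mul, mul_assoc] using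
      convexOn_exp.2 (Set.mem_univ (L * y)) (Set.mem_univ 0) hθ0 (by linarith : 0 ≤ 1 - θ)
        (by ring)
  calc expMoment Y P (θ * L)
      ≤ ∫⁻ ω, ENNReal.ofReal θ * ENNReal.ofReal (Real.exp (L * Y ω)) +
          ENNReal.ofReal (1 - θ) ∂P :=
        lintegral_mono fun ω => by
          rw [← ENNReal.ofReal_mul hθ0, ← ENNReal.ofReal_add (by positivity) (by linarith)]
          exact ENNReal.ofReal_le_ofReal (hconv (Y ω))
    _ = ENNReal.ofReal θ * expMoment Y P L + ENNReal.ofReal (1 - θ) := by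
        rw [lintegral_add_right' _ aemeasurable_const,
          lintegral_const_mul' _ _ ENNReal.ofReal_ne_top, lintegral_const, measure_univ, mul_one,
          expMoment]
    _ ≤ ENNReal.ofReal θ * 1 + ENNReal.ofReal (1 - θ) := by gcongr
    _ = 1 := by
        rw [mul_one, ← ENNReal.ofReal_add hθ0 (by linarith), add_sub_cancel, ENNReal.ofReal_one]

lemma measure_le_exp_mul_setLIntegral_exp {P : Measure Ω} {Y : Ω → ℝ} {B : Set Ω}
    (hB : MeasurableSet B) {h u : ℝ} (hh : 0 ≤ h) (hBY : ∀ ω ∈ B, u < Y ω) :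
    P B ≤ ENNReal.ofReal (Real.exp (-h * u)) *
      ∫⁻ ω in B, ENNReal.ofReal (Real.exp (h * Y ω)) ∂P := by
  rw [← lintegral_const_mul' _ _ ENNReal.ofReal_ne_top, ← setLIntegral_one]
  refine setLIntegral_mono' hB fun ω hω => ?_
  have hu := hBY ω hω
  rw [← ENNReal.ofReal_mul (Real.exp_nonneg _), ← Real.exp_add, ← ENNReal.ofReal_one]
  exact ENNReal.ofReal_le_ofReal (Real.one_le_exp (by nlinarith))

section Maximal

variable {X : ℕ → Ω → ℝ} {P : Measure Ω} [NeZero P] {h u : ℝ} {M : ℝ≥0∞}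

lemma sum_measure_le_of_lt_partialSum (hmeas : ∀ i, Measurable (X i)) (hindep : iIndepFun X P)
    (hh : 0 ≤ h) (hM : ∀ k, expMoment (partialSum X (k + 1)) P h ≤ M) (hM_top : M ≠ ⊤)
    {B : ℕ → Set Ω} (hB : ∀ k, MeasurableSet[pastSigma X (k + 1)] (B k))
    (hdisj : Pairwise (Disjoint on B)) (hBS : ∀ k, ∀ ω ∈ B k, u < partialSum X (k + 1) ω)
    (K : ℕ) : ∑ k ∈ range K, P (B k) ≤ ENNReal.ofReal (Real.exp (-h * u)) * M := by
  set A := expMoment (partialSum X (K + 1)) P h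
  have hA_top : A ≠ ⊤ := ne_top_of_le_ne_top hM_top (hM K)
  have hA_zero : A ≠ 0 := expMoment_ne_zero
    (Finset.measurable_sum _ fun j _ => hmeas j).aemeasurable h
  refine (ENNReal.mul_le_mul_iff_right hA_zero hA_top).1 ?_
  calc A * ∑ k ∈ range K, P (B k)
      ≤ ∑ k ∈ range K, A * (ENNReal.ofReal (Real.exp (-h * u)) *
          ∫⁻ ω in B k, ENNReal.ofReal (Real.exp (h * partialSum X (k + 1) ω)) ∂P) := by
        rw [mul_sum]
        gcongr with k
        exact measure_le_exp_mul_setLIntegral_exp (pastSigma_le hmeas _ (hB k)) hh (hBS k)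
    _ = ENNReal.ofReal (Real.exp (-h * u)) * ∑ k ∈ range K, expMoment (partialSum X (k + 1)) P h *
          ∫⁻ ω in B k, ENNReal.ofReal (Real.exp (h * partialSum X (K + 1) ω)) ∂P := by
        rw [mul_sum]
        refine sum_congr rfl fun k hk => ?_
        rw [mul_left_comm, expMoment_mul_setLIntegral_exp_partialSum_comm hmeas hindep (hB k)
          (by simp only [mem_range] at hk; omega)]
    _ ≤ ENNReal.ofReal (Real.exp (-h * u)) * ∑ k ∈ range K, M *
          ∫⁻ ω in B k, ENNReal.ofReal (Real.exp (h * partialSum X (K + 1) ω)) ∂P := by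
        gcongr with k
        exact hM k
    _ = ENNReal.ofReal (Real.exp (-h * u)) * M * ∫⁻ ω in ⋃ k ∈ range K, B k,
          ENNReal.ofReal (Real.exp (h * partialSum X (K + 1) ω)) ∂P := by
        rw [lintegral_biUnion_finset (fun i _ j _ hij => hdisj hij)
          (fun k _ => pastSigma_le hmeas _ (hB k)), mul_assoc, mul_sum _ _ M]
    _ ≤ ENNReal.ofReal (Real.exp (-h * u)) * M * A := by
        gcongr
        exact setLIntegral_le_lintegral _ _
    _ = A * (ENNReal.ofReal (Real.exp (-h * u)) * M) := mul_comm _ _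

theorem measure_iUnion_lt_partialSum_le (hmeas : ∀ i, Measurable (X i)) (hindep : iIndepFun X P)
    (hh : 0 ≤ h) (hM : ∀ k, expMoment (partialSum X (k + 1)) P h ≤ M) (u : ℝ) :
    P (⋃ k, {ω | u < partialSum X (k + 1) ω}) ≤ ENNReal.ofReal (Real.exp (-h * u)) * M := by
  rcases eq_or_ne M ⊤ with rfl | hM_top
  · rw [ENNReal.mul_top (ENNReal.ofReal_pos.2 (Real.exp_pos _)).ne']
    exact le_top
  set E : ℕ → Set Ω := fun k => {ω | u < partialSum X (k + 1) ω}
  -- `disjointed E k` is the event that `k + 1` is the first index at which `u` is exceeded.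
  have hB (k : ℕ) : MeasurableSet[pastSigma X (k + 1)] (disjointed E k) := by
    rw [disjointed_eq_inf_compl]
    exact (measurableSet_lt measurable_const (measurable_partialSum_pastSigma le_rfl)).inter
      (MeasurableSet.iInter fun j => MeasurableSet.iInter fun hj =>
        (measurableSet_lt measurable_const (measurable_partialSum_pastSigma (by omega))).compl)
  calc P (⋃ k, E k) = P (⋃ k, disjointed E k) := by rw [iUnion_disjointed]
    _ ≤ ∑' k, P (disjointed E k) := measure_iUnion_le _
    _ = ⨆ K, ∑ k ∈ range K, P (disjointed E k) := ENNReal.tsum_eq_iSup_nat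
    _ ≤ _ := iSup_le <| sum_measure_le_of_lt_partialSum hmeas hindep hh hM hM_top hB
      (disjoint_disjointed E) fun k _ hω => disjointed_le E k hω

end Maximal

end PartialSums

theorem stmt11_general {Ω : Type*} [MeasurableSpace Ω] (P : Measure Ω) [IsProbabilityMeasure P]
    (X : ℕ → Ω → ℝ)
    (hmeas : ∀ i, Measurable (X i))
    (hindep : iIndepFun X P)
    (S : ℕ → Ω → ℝ) (hS : ∀ k ω, S k ω = ∑ j ∈ Finset.range k, X j ω)
    (l m : ℕ) (hl : 1 ≤ l) (hm : 1 ≤ m)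
    (Lstar : ℝ)
    (hcond : ∀ n : ℕ, m ≤ n →
      ∫⁻ ω, ENNReal.ofReal (Real.exp (Lstar * (S (n + l) ω - S n ω))) ∂P ≤ 1)
    (h : ℝ) (hh0 : 0 ≤ h) (hhL : h ≤ Lstar) :
    (⨆ k : ℕ, ∫⁻ ω, ENNReal.ofReal (Real.exp (h * S (k + 1) ω)) ∂P) =
      (⨆ k ∈ Finset.Icc 1 (l + m - 1),
        ∫⁻ ω, ENNReal.ofReal (Real.exp (h * S k ω)) ∂P) ∧
    ∀ u : ℝ, 0 < u →
      P (⋃ k : ℕ, {ω | u < S (k + 1) ω}) ≤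
        ENNReal.ofReal (Real.exp (-h * u)) *
          ⨆ k ∈ Finset.Icc 1 (l + m - 1),
            ∫⁻ ω, ENNReal.ofReal (Real.exp (h * S k ω)) ∂P := by
  obtain rfl : S = partialSum X := funext₂ hS
  have hstep (n : ℕ) (hn : m ≤ n) :
      expMoment (partialSum X (n + l)) P h ≤ expMoment (partialSum X n) P h := by
    rw [expMoment_partialSum_eq_mul hmeas hindep (Nat.le_add_right n l)]
    exact mul_le_of_le_one_right' (expMoment_le_one_of_le hh0 hhL (hcond n hn))
  have hsup (k : ℕ) (hk : 1 ≤ k) : expMoment (partialSum X k) P h ≤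
      ⨆ j ∈ Icc 1 (l + m - 1), expMoment (partialSum X j) P h :=
    le_biSup_Icc_of_add_le (a := fun k => expMoment (partialSum X k) P h) hl hm hstep hk
  exact ⟨iSup_add_one_eq_biSup_Icc_of_add_le (a := fun k => expMoment (partialSum X k) P h)
    hl hm hstep, fun u _ => measure_iUnion_lt_partialSum_le hmeas hindep hh0
      (fun k => hsup (k + 1) (Nat.le_add_left 1 k)) u⟩

/-- Corollary: quasi-periodic bound via condition (p1).
`X j` stands for `X_{j+1}` and `S* k = X_1 + ⋯ + X_k = ∑_{j < k} X j` (so `S* 0 = 0`).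
Suppose `l, m ≥ 1` and `L* ≥ 0` satisfy `E[e^{L* (S*_{n+l} − S*_n)}] ≤ 1` for all `n ≥ m`.
Then for every `h ∈ [0, L*]`:
`sup_{k≥1} E[e^{h S*_k}] = max_{1 ≤ k ≤ l+m-1} E[e^{h S*_k}]`, and for every `u > 0`:
`P[sup_{k≥1} S*_k > u] ≤ e^{-h u} · max_{1 ≤ k ≤ l+m-1} E[e^{h S*_k}]`. -/
theorem stmt11 {Ω : Type*} [MeasurableSpace Ω] (P : Measure Ω) [IsProbabilityMeasure P]
    (X : ℕ → Ω → ℝ)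
    (hmeas : ∀ i, Measurable (X i))
    (hindep : iIndepFun X P)
    (S : ℕ → Ω → ℝ) (hS : ∀ k ω, S k ω = ∑ j ∈ Finset.range k, X j ω)
    (l m : ℕ) (hl : 1 ≤ l) (hm : 1 ≤ m)
    (Lstar : ℝ) (hLstar : 0 ≤ Lstar)
    (hcond : ∀ n : ℕ, m ≤ n →
      ∫⁻ ω, ENNReal.ofReal (Real.exp (Lstar * (S (n + l) ω - S n ω))) ∂P ≤ 1)
    (h : ℝ) (hh0 : 0 ≤ h) (hhL : h ≤ Lstar) :
    (⨆ k : ℕ, ∫⁻ ω, ENNReal.ofReal (Real.exp (h * S (k + 1) ω)) ∂P) =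
      (⨆ k ∈ Finset.Icc 1 (l + m - 1),
        ∫⁻ ω, ENNReal.ofReal (Real.exp (h * S k ω)) ∂P) ∧
    ∀ u : ℝ, 0 < u →
      P (⋃ k : ℕ, {ω | u < S (k + 1) ω}) ≤
        ENNReal.ofReal (Real.exp (-h * u)) *
          ⨆ k ∈ Finset.Icc 1 (l + m - 1),
            ∫⁻ ω, ENNReal.ofReal (Real.exp (h * S k ω)) ∂P :=
  stmt11_general P X hmeas hindep S hS l m hl hm Lstar hcond h hh0 hhL
end

section
/- Let Y_1^*, Y_2^*, … be mutually independent real-valued random variables, (r_k)_{k≥1} nonnegative reals, v_k = ∏_{j=1}^{k} 1/(1 + r_j) (v_0 = 1), and S_k^* = Σ_{j=1}^{k} v_{j−1} Y_j^*. Suppose there exist an integer l ≥ 1 and a real q_l > 0 such that for all n ≥ 1 the random variables Y_{n+l}^* and q_l Y_n^* are identically distributed, r_{n+l} = r_n for all n ≥ 1, and q_l v_l ≤ 1. If h ≥ 0 satisfies E[e^{h S_l^*}] ≤ 1, then sup_{k≥1} E[e^{h S_k^*}] ≤ max_{0≤k<l} E[e^{h S_k^*}] (the maximum includes k = 0, for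 which E[e^{h S_0^*}] = 1), and consequently for every u > 0: P[sup_{k≥1} S_k^* > u] ≤ e^{−hu} · max_{0≤k<l} E[e^{h S_k^*}]. -/
/-!
Put `X i = h v_i Y*_{i+1}`, so that `h S*_k = ∑_{i<k} X i` and, by independence,
`M_k = E[e^{h S*_k}] = ∏_{i<k} E[e^{X i}]`. Quasi-periodicity gives `v_{l+i} = v_l v_i` and
`X (l+i) ~ q v_l X i`, so Jensen's inequality for the concave power `x ↦ x^{q v_l}` yields
`E[e^{X (l+i)}] ≤ E[e^{X i}]^{q v_l}`, hence `M_{l+k} ≤ M_l M_k^{q v_l} ≤ M_k^{q v_l}`.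
As `q v_l ≤ 1`, the right side never exceeds `max 1 M_k`, and strong induction bounds every
`M_k` by `max_{k<l} M_k`. The tail bound is Ville's maximal inequality for the mean-one
product martingale `e^{h S*_k} / M_k`.
-/

open MeasureTheory ProbabilityTheory
open Finset
open scoped ENNReal

theorem prod_Icc_one_add_of_periodic {M : Type*} [CommMonoid M] {a : ℕ → M} {l : ℕ}
    (ha : ∀ n, 1 ≤ n → a (n + l) = a n) (i : ℕ) :
    ∏ j ∈ Icc 1 (l + i), a j = (∏ j ∈ Icc 1 l, a j) * ∏ j ∈ Icc 1 i, a j := by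
  induction i with
  | zero => simp
  | succ i ih =>
    rw [← add_assoc, prod_Icc_succ_top (by omega), prod_Icc_succ_top (by omega), ih, mul_assoc,
      show l + i + 1 = i + 1 + l by omega, ha _ (by omega)]

theorem ENNReal.le_of_le_rpow_of_shift {M : ℕ → ℝ≥0∞} {B : ℝ≥0∞} {c : ℝ} {l : ℕ}
    (hl : 0 < l) (hc0 : 0 ≤ c) (hc1 : c ≤ 1) (hB : 1 ≤ B) (hbase : ∀ k < l, M k ≤ B)
    (hshift : ∀ k, M (l + k) ≤ M k ^ c) (k : ℕ) : M k ≤ B := by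
  induction k using Nat.strong_induction_on with
  | _ k ih =>
    obtain hk | hk := lt_or_ge k l
    · exact hbase k hk
    obtain ⟨m, rfl⟩ := Nat.exists_eq_add_of_le hk
    refine (hshift m).trans ?_
    obtain hm | hm := le_total (M m) 1
    · exact (ENNReal.rpow_le_one hm hc0).trans hB
    · calc M m ^ c ≤ M m ^ (1 : ℝ) := ENNReal.rpow_le_rpow_of_exponent_le hm hc1
        _ = M m := ENNReal.rpow_one _
        _ ≤ B := ih m (by omega)

section

variable {Ω : Type*} [MeasurableSpace Ω] {P : Measure Ω}

theorem lintegral_rpow_le_rpow_lintegral [IsProbabilityMeasure P] {f : Ω → ℝ≥0∞}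
    (hf : AEMeasurable f P) {c : ℝ} (hc0 : 0 ≤ c) (hc1 : c ≤ 1) :
    ∫⁻ ω, f ω ^ c ∂P ≤ (∫⁻ ω, f ω ∂P) ^ c := by
  simpa using ENNReal.lintegral_mul_norm_pow_le (μ := P) hf
    (aemeasurable_const (b := (1 : ℝ≥0∞))) hc0 (sub_nonneg.2 hc1) (add_sub_cancel c 1)

theorem lintegral_exp_le_rpow_of_map_eq [IsProbabilityMeasure P] {Y Y' : Ω → ℝ}
    (hY : Measurable Y) (hY' : Measurable Y') {q : ℝ}
    (hmap : P.map Y' = P.map (fun ω => q * Y ω)) {a : ℝ} (ha0 : 0 ≤ q * a) (ha1 : q * a ≤ 1)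
    (s : ℝ) :
    ∫⁻ ω, ENNReal.ofReal (Real.exp (s * a * Y' ω)) ∂P ≤
      (∫⁻ ω, ENNReal.ofReal (Real.exp (s * Y ω)) ∂P) ^ (q * a) := by
  have hφ : Measurable fun x => ENNReal.ofReal (Real.exp (s * a * x)) := by fun_prop
  calc ∫⁻ ω, ENNReal.ofReal (Real.exp (s * a * Y' ω)) ∂P
      = ∫⁻ ω, ENNReal.ofReal (Real.exp (s * a * (q * Y ω))) ∂P := by
        rw [← lintegral_map hφ hY', hmap, lintegral_map hφ (by fun_prop)]
    _ = ∫⁻ ω, ENNReal.ofReal (Real.exp (s * Y ω)) ^ (q * a) ∂P := by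
        refine lintegral_congr fun ω => ?_
        rw [ENNReal.ofReal_rpow_of_pos (Real.exp_pos _), ← Real.exp_mul]
        ring_nf
    _ ≤ _ := lintegral_rpow_le_rpow_lintegral (by fun_prop) ha0 ha1

end

theorem measurable_biSup_comap {Ω ι β : Type*} [mβ : MeasurableSpace β] {W : ι → Ω → β}
    {S : Set ι} {i : ι} (hi : i ∈ S) : Measurable[⨆ j ∈ S, mβ.comap (W j)] (W i) :=
  Measurable.of_comap_le (le_biSup (fun j => mβ.comap (W j)) hi)

section Independence

variable {Ω ι β : Type*} [MeasurableSpace Ω] {P : Measure Ω} [mβ : MeasurableSpace β]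

theorem ProbabilityTheory.iIndepFun.lintegral_mul_of_disjoint {W : ι → Ω → β}
    (hW : ∀ i, Measurable (W i)) (hind : iIndepFun W P) {S T : Set ι} (hST : Disjoint S T)
    {F G : Ω → ℝ≥0∞} (hF : Measurable[⨆ i ∈ S, mβ.comap (W i)] F)
    (hG : Measurable[⨆ i ∈ T, mβ.comap (W i)] G) :
    ∫⁻ ω, F ω * G ω ∂P = (∫⁻ ω, F ω ∂P) * ∫⁻ ω, G ω ∂P := by
  have hle : ∀ i, mβ.comap (W i) ≤ ‹MeasurableSpace Ω› := fun i => (hW i).comap_le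
  exact lintegral_mul_eq_lintegral_mul_lintegral_of_independent_measurableSpace
    (iSup₂_le fun i _ => hle i) (iSup₂_le fun i _ => hle i)
    (indep_iSup_of_disjoint hle hind.iIndep hST) hF hG

theorem ProbabilityTheory.iIndepFun.lintegral_exp_sum {X : ι → Ω → ℝ}
    (hX : ∀ i, Measurable (X i)) (hind : iIndepFun X P) (s : Finset ι) :
    ∫⁻ ω, ENNReal.ofReal (Real.exp (∑ i ∈ s, X i ω)) ∂P =
      ∏ i ∈ s, ∫⁻ ω, ENNReal.ofReal (Real.exp (X i ω)) ∂P := by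
  simp_rw [Real.exp_sum, ENNReal.ofReal_prod_of_nonneg fun i _ => (Real.exp_pos (X i _)).le]
  exact lintegral_prod_eq_prod_lintegral_of_indepFun s _
    (hind.comp (fun _ x => ENNReal.ofReal (Real.exp x)) fun _ => by fun_prop) fun i => by fun_prop

/-- Ville's inequality for the nonnegative product martingale `∏_{i<n} W i`. -/
theorem ProbabilityTheory.iIndepFun.mul_measure_iUnion_le_prod_le_one
    {W : ℕ → Ω → ℝ≥0∞} (hW : ∀ i, Measurable (W i)) (hind : iIndepFun W P)
    (hW1 : ∀ i, ∫⁻ ω, W i ω ∂P = 1)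
    (c : ℝ≥0∞) : c * P (⋃ n, {ω | c ≤ ∏ i ∈ range n, W i ω}) ≤ 1 := by
  set A : ℕ → Set Ω := fun n => {ω | c ≤ ∏ i ∈ range n, W i ω}
  have hprod_meas : ∀ {m n}, m ≤ n →
      Measurable[⨆ i ∈ Set.Iio n, (inferInstance : MeasurableSpace ℝ≥0∞).comap (W i)]
        fun ω => ∏ i ∈ range m, W i ω := fun hmn =>
    Finset.measurable_prod _ fun i hi =>
      measurable_biSup_comap (Set.mem_Iio.2 ((mem_range.1 hi).trans_le hmn))
  have hD_meas : ∀ n, MeasurableSet[⨆ i ∈ Set.Iio n,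
      (inferInstance : MeasurableSpace ℝ≥0∞).comap (W i)] (disjointed A n) := fun n => by
    rw [disjointed_eq_inter_compl]
    exact (measurableSet_le measurable_const (hprod_meas le_rfl)).inter
      (MeasurableSet.biInter (Set.to_countable _) fun j hj =>
        (measurableSet_le measurable_const (hprod_meas (le_of_lt hj))).compl)
  have hD_meas' : ∀ n, MeasurableSet (disjointed A n) := fun n =>
    (iSup₂_le fun i _ => (hW i).comap_le) _ (hD_meas n)
  -- the product martingale stopped on `disjointed A n` keeps its mass at later times
  have hstop : ∀ {n N}, n ≤ N → ∫⁻ ω in disjointed A n, ∏ i ∈ range N, W i ω ∂P =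
      ∫⁻ ω in disjointed A n, ∏ i ∈ range n, W i ω ∂P := by
    intro n N hnN
    rw [← lintegral_indicator (hD_meas' n), ← lintegral_indicator (hD_meas' n)]
    simp_rw [← prod_range_mul_prod_Ico _ hnN, Set.indicator_mul_left]
    rw [hind.lintegral_mul_of_disjoint hW (Set.Iio_disjoint_Ici le_rfl)
      ((hprod_meas le_rfl).indicator (hD_meas n))
      (Finset.measurable_prod _ fun i hi => measurable_biSup_comap (mem_Ico.1 hi).1),
      lintegral_prod_eq_prod_lintegral_of_indepFun _ _ hind hW, prod_eq_one fun i _ => hW1 i,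
      mul_one]
  have hpartial : ∀ N, c * ∑ n ∈ range N, P (disjointed A n) ≤ 1 := fun N => by
    calc c * ∑ n ∈ range N, P (disjointed A n)
        ≤ ∑ n ∈ range N, ∫⁻ ω in disjointed A n, ∏ i ∈ range N, W i ω ∂P := by
          rw [mul_sum]
          refine sum_le_sum fun n hn => ?_
          rw [hstop (mem_range.1 hn).le, ← setLIntegral_const]
          exact setLIntegral_mono' (hD_meas' n) fun ω hω => disjointed_subset A n hω
      _ = ∫⁻ ω in ⋃ n ∈ range N, disjointed A n, ∏ i ∈ range N, W i ω ∂P :=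
          (lintegral_biUnion_finset ((disjoint_disjointed A).set_pairwise _)
            (fun n _ => hD_meas' n) _).symm
      _ ≤ ∫⁻ ω, ∏ i ∈ range N, W i ω ∂P := setLIntegral_le_lintegral _ _
      _ = 1 := by
          rw [lintegral_prod_eq_prod_lintegral_of_indepFun _ _ hind hW,
            prod_eq_one fun i _ => hW1 i]
  rw [← iUnion_disjointed, measure_iUnion (disjoint_disjointed A) hD_meas',
    ENNReal.tsum_eq_iSup_nat, ENNReal.mul_iSup]
  exact iSup_le hpartial

end Independence

section ExponentialMoments

variable {Ω : Type*} [MeasurableSpace Ω] {P : Measure Ω} {X : ℕ → Ω → ℝ}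

theorem ProbabilityTheory.iIndepFun.measure_exists_lt_sum_le (hX : ∀ i, Measurable (X i))
    (hind : iIndepFun X P) (t : ℝ) {B : ℝ≥0∞}
    (hB : ∀ n, ∫⁻ ω, ENNReal.ofReal (Real.exp (∑ i ∈ range n, X i ω)) ∂P ≤ B) :
    P {ω | ∃ n, t < ∑ i ∈ range n, X i ω} ≤ ENNReal.ofReal (Real.exp (-t)) * B := by
  obtain rfl | hBtop := eq_or_ne B ⊤
  · simp [ENNReal.mul_top, Real.exp_pos]
  have : IsProbabilityMeasure P := hind.isProbabilityMeasure
  set g : ℕ → ℝ≥0∞ := fun i => ∫⁻ ω, ENNReal.ofReal (Real.exp (X i ω)) ∂P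
  have hprod_le : ∀ n, ∏ i ∈ range n, g i ≤ B := fun n =>
    hind.lintegral_exp_sum hX (range n) ▸ hB n
  have hg0 : ∀ i, g i ≠ 0 := fun i =>
    ((lintegral_pos_iff_support (by fun_prop)).2 (by simp [Function.support, Real.exp_pos])).ne'
  have hgtop : ∀ i, g i ≠ ⊤ := fun i hi => by
    have := hprod_le (i + 1)
    rw [prod_range_succ, hi, ENNReal.mul_top (prod_ne_zero_iff.2 fun j _ => hg0 j)] at this
    exact hBtop (top_le_iff.1 this)
  -- normalising the factors turns `exp (∑ X i)` into a product martingale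
  set W : ℕ → Ω → ℝ≥0∞ := fun i ω => ENNReal.ofReal (Real.exp (X i ω)) * (g i)⁻¹
  have hW1 : ∀ i, ∫⁻ ω, W i ω ∂P = 1 := fun i => by
    rw [lintegral_mul_const' _ _ (ENNReal.inv_ne_top.2 (hg0 i)),
      ENNReal.mul_inv_cancel (hg0 i) (hgtop i)]
  have hWind : iIndepFun W P :=
    hind.comp (fun i x => ENNReal.ofReal (Real.exp x) * (g i)⁻¹) fun i => by fun_prop
  set c := ENNReal.ofReal (Real.exp t) * B⁻¹
  have hsub :
      {ω | ∃ n, t < ∑ i ∈ range n, X i ω} ⊆ ⋃ n, {ω | c ≤ ∏ i ∈ range n, W i ω} := by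
    rintro ω ⟨n, hn⟩
    refine Set.mem_iUnion.2 ⟨n, ?_⟩
    change c ≤ ∏ i ∈ range n, ENNReal.ofReal (Real.exp (X i ω)) * (g i)⁻¹
    rw [prod_mul_distrib, ← ENNReal.ofReal_prod_of_nonneg fun i _ => (Real.exp_pos _).le,
      ← Real.exp_sum, ← ENNReal.prod_inv_distrib fun i _ j _ _ => Or.inl (hg0 i)]
    exact mul_le_mul' (ENNReal.ofReal_le_ofReal (Real.exp_le_exp.2 hn.le))
      (ENNReal.inv_le_inv.2 (hprod_le n))
  calc P {ω | ∃ n, t < ∑ i ∈ range n, X i ω}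
      ≤ P (⋃ n, {ω | c ≤ ∏ i ∈ range n, W i ω}) := measure_mono hsub
    _ ≤ c⁻¹ := ENNReal.le_inv_iff_mul_le.2 <| by
        rw [mul_comm]
        exact hWind.mul_measure_iUnion_le_prod_le_one (fun i => by fun_prop) hW1 c
    _ = ENNReal.ofReal (Real.exp (-t)) * B := by
        rw [ENNReal.mul_inv (Or.inl (by simp [Real.exp_pos])) (Or.inl ENNReal.ofReal_ne_top),
          inv_inv, ← ENNReal.ofReal_inv_of_pos (Real.exp_pos t), ← Real.exp_neg]

theorem ProbabilityTheory.iIndepFun.lintegral_exp_sum_le_biSup (hX : ∀ i, Measurable (X i))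
    (hind : iIndepFun X P) {c : ℝ} (hc0 : 0 ≤ c) (hc1 : c ≤ 1) {l : ℕ} (hl : 0 < l)
    (hl1 : ∫⁻ ω, ENNReal.ofReal (Real.exp (∑ i ∈ range l, X i ω)) ∂P ≤ 1)
    (hshift : ∀ i, ∫⁻ ω, ENNReal.ofReal (Real.exp (X (l + i) ω)) ∂P ≤
      (∫⁻ ω, ENNReal.ofReal (Real.exp (X i ω)) ∂P) ^ c) (k : ℕ) :
    ∫⁻ ω, ENNReal.ofReal (Real.exp (∑ i ∈ range k, X i ω)) ∂P ≤
      ⨆ j ∈ range l, ∫⁻ ω, ENNReal.ofReal (Real.exp (∑ i ∈ range j, X i ω)) ∂P := by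
  have : IsProbabilityMeasure P := hind.isProbabilityMeasure
  set M : ℕ → ℝ≥0∞ := fun k =>
    ∫⁻ ω, ENNReal.ofReal (Real.exp (∑ i ∈ range k, X i ω)) ∂P
  have hshift_sum : ∀ k, M (l + k) ≤ M k ^ c := fun k => by
    simp only [M, hind.lintegral_exp_sum hX] at hl1 ⊢
    rw [prod_range_add, ← ENNReal.prod_rpow_of_nonneg hc0]
    calc _ ≤ 1 * ∏ i ∈ range k, (∫⁻ ω, ENNReal.ofReal (Real.exp (X i ω)) ∂P) ^ c :=
          mul_le_mul' hl1 (prod_le_prod' fun i _ => hshift i)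
      _ = _ := one_mul _
  refine ENNReal.le_of_le_rpow_of_shift hl hc0 hc1 ?_ (fun j hj => le_biSup M (mem_range.2 hj))
    hshift_sum k
  simpa [M] using le_biSup M (mem_range.2 hl)

end ExponentialMoments

/-- Theorem 3, quasi-periodic model, case `q_l v_l ≤ 1`.
Random variables are 1-indexed (index `0` unused): `v k = ∏_{j=1}^{k} 1/(1+r_j)`
(so `v 0 = 1`) and `S*_k = ∑_{j=1}^{k} v_{j-1} Y*_j` (so `S*_0 = 0`).
Assume `l ≥ 1`, `q_l > 0`, `Y*_{n+l}` is distributed as `q_l Y*_n` and `r_{n+l} = r_n`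
for all `n ≥ 1`, and `q_l v_l ≤ 1`.  If `h ≥ 0` satisfies `E[e^{h S*_l}] ≤ 1`, then
`sup_{k≥1} E[e^{h S*_k}] ≤ max_{0 ≤ k < l} E[e^{h S*_k}]` (the max includes `k = 0`,
where `E[e^{h S*_0}] = 1`), and for every `u > 0`:
`P[sup_{k≥1} S*_k > u] ≤ e^{-h u} · max_{0 ≤ k < l} E[e^{h S*_k}]`. -/
theorem stmt12 {Ω : Type*} [MeasurableSpace Ω] (P : Measure Ω) [IsProbabilityMeasure P]
    (Ystar : ℕ → Ω → ℝ)
    (hmeas : ∀ i, Measurable (Ystar i))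
    (hindep : iIndepFun (fun k : ℕ => Ystar (k + 1)) P)
    (r : ℕ → ℝ) (hr : ∀ k : ℕ, 1 ≤ k → 0 ≤ r k)
    (v : ℕ → ℝ) (hv : ∀ k, v k = ∏ j ∈ Finset.Icc 1 k, (1 + r j)⁻¹)
    (Sstar : ℕ → Ω → ℝ)
    (hSstar : ∀ k ω, Sstar k ω = ∑ j ∈ Finset.Icc 1 k, v (j - 1) * Ystar j ω)
    (l : ℕ) (hl : 1 ≤ l) (q : ℝ) (hq : 0 < q)
    (hper : ∀ n : ℕ, 1 ≤ n →
      Measure.map (Ystar (n + l)) P = Measure.map (fun ω => q * Ystar n ω) P)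
    (hrper : ∀ n : ℕ, 1 ≤ n → r (n + l) = r n)
    (hqv : q * v l ≤ 1)
    (h : ℝ) (hh : 0 ≤ h)
    (hSl : ∫⁻ ω, ENNReal.ofReal (Real.exp (h * Sstar l ω)) ∂P ≤ 1) :
    (⨆ k : ℕ, ∫⁻ ω, ENNReal.ofReal (Real.exp (h * Sstar (k + 1) ω)) ∂P) ≤
      (⨆ k ∈ Finset.range l, ∫⁻ ω, ENNReal.ofReal (Real.exp (h * Sstar k ω)) ∂P) ∧
    ∀ u : ℝ, 0 < u →
      P (⋃ k : ℕ, {ω | u < Sstar (k + 1) ω}) ≤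
        ENNReal.ofReal (Real.exp (-h * u)) *
          ⨆ k ∈ Finset.range l, ∫⁻ ω, ENNReal.ofReal (Real.exp (h * Sstar k ω)) ∂P := by
  set X : ℕ → Ω → ℝ := fun i ω => h * v i * Ystar (i + 1) ω
  have hX : ∀ i, Measurable (X i) := fun i => (hmeas (i + 1)).const_mul _
  have hXind : iIndepFun X P := hindep.comp (fun i x => h * v i * x) fun i => by fun_prop
  have hS : ∀ n ω, h * Sstar n ω = ∑ i ∈ range n, X i ω := fun n ω => by
    rw [hSstar, mul_sum, ← Ico_add_one_right_eq_Icc, sum_Ico_eq_sum_range]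
    refine sum_congr (by simp) fun i _ => ?_
    simp only [X, add_comm 1 i, Nat.add_sub_cancel]
    ring
  have hvl : 0 ≤ q * v l := mul_nonneg hq.le <| (hv l).symm ▸
    prod_nonneg fun j hj => inv_nonneg.2 (by linarith [hr j (mem_Icc.1 hj).1])
  have hv_add : ∀ i, v (l + i) = v l * v i := fun i => by
    simp only [hv]
    exact prod_Icc_one_add_of_periodic (fun n hn => by rw [hrper n hn]) i
  have hshift : ∀ i, ∫⁻ ω, ENNReal.ofReal (Real.exp (X (l + i) ω)) ∂P ≤
      (∫⁻ ω, ENNReal.ofReal (Real.exp (X i ω)) ∂P) ^ (q * v l) := fun i => by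
    convert lintegral_exp_le_rpow_of_map_eq (hmeas (i + 1)) (hmeas (i + 1 + l))
      (hper (i + 1) (by omega)) hvl hqv (h * v i) using 5 with ω
    simp only [X, hv_add, show l + i + 1 = i + 1 + l by omega]
    ring
  simp only [hS]
  set B := ⨆ k ∈ range l, ∫⁻ ω, ENNReal.ofReal (Real.exp (∑ i ∈ range k, X i ω)) ∂P
  have hMB : ∀ k, ∫⁻ ω, ENNReal.ofReal (Real.exp (∑ i ∈ range k, X i ω)) ∂P ≤ B :=
    hXind.lintegral_exp_sum_le_biSup hX hvl hqv hl (by simpa only [hS] using hSl) hshift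
  refine ⟨iSup_le fun k => hMB (k + 1), fun u _ => ?_⟩
  obtain rfl | hpos := hh.eq_or_lt
  · rw [neg_zero, zero_mul, Real.exp_zero, ENNReal.ofReal_one, one_mul]
    exact prob_le_one.trans (by simpa using hMB 0)
  calc P (⋃ k : ℕ, {ω | u < Sstar (k + 1) ω})
      ≤ P {ω | ∃ n, h * u < ∑ i ∈ range n, X i ω} :=
        measure_mono <| Set.iUnion_subset fun k ω hk =>
          ⟨k + 1, hS (k + 1) ω ▸ mul_lt_mul_of_pos_left hk hpos⟩
    _ ≤ _ := by
        rw [neg_mul]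
        exact hXind.measure_exists_lt_sum_le hX (h * u) hMB
end
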